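/- arXiv:2311.00528 — 6 statements merged into one kernel-verified Lean document; each statement's English description precedes it below -/
import Mathlib

section
/- Under consistency (Y = A·Y(1) + (1−A)·Y(0)), unconfoundedness in the source population (A ⟂ (Y(0),Y(1)) | X, G=1), positivity of the source propensity score, transportability (G ⟂ (Y(0),Y(1)) | X), and positivity of the sampling score, the target-population average treatment effect τ = E[Y(1) − Y(0) | G=0] equals E[μ1(X) − μ0(X) | G=0], where μa(x) = E[Y | X=x, A=a, G=1]. -/
open MeasureTheory ProbabilityTheory Filter Topology

def mX {Ω : Type*} (X : Ω → ℝ) : MeasurableSpace Ω :=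
  MeasurableSpace.comap X inferInstance

/-!
Conditionally on `X`, transportability says that `G` is uncorrelated with every bounded function
of `(Y0, Y1)`, with conditional mean `π(X)`; combined with unconfoundedness the same holds for
`G * A`, with conditional mean `e1(X) π(X)`. Truncating and passing to the limit under the
conditional expectation extends both identities to integrable functions of `(Y0, Y1)`.
By consistency `A G Y = G A Y1` and `(1 - A) G Y = (G - G A) Y0`, so cancelling the positive
factors `e1 π` and `(1 - e1) π` gives `μ1(X) = E[Y1 | X]` and `μ0(X) = E[Y0 | X]`. Finally
`1 - G` is conditionally uncorrelated with `Y1 - Y0`, hence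
`E[(1 - G)(Y1 - Y0)] = E[(1 - G) E[Y1 - Y0 | X]] = E[(1 - G)(μ1(X) - μ0(X))]`.
-/

theorem norm_le_one_of_eq_zero_or_eq_one {x : ℝ} (hx : x = 0 ∨ x = 1) : ‖x‖ ≤ 1 := by
  rcases hx with rfl | rfl <;> simp

theorem mul_eq_zero_or_eq_one {x y : ℝ} (hx : x = 0 ∨ x = 1) (hy : y = 0 ∨ y = 1) :
    x * y = 0 ∨ x * y = 1 := by
  rcases hx with rfl | rfl <;> simp [hy]

theorem Measurable.exists_seq_bounded_tendsto {β : Type*} [MeasurableSpace β] {φ : β → ℝ}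
    (hφ : Measurable φ) :
    ∃ fs : ℕ → β → ℝ, (∀ n, Measurable (fs n)) ∧ (∀ n, ∃ C, ∀ b, |fs n b| ≤ C) ∧
      (∀ n b, |fs n b| ≤ |φ b|) ∧ ∀ b, Tendsto (fun n => fs n b) atTop (𝓝 (φ b)) := by
  refine ⟨fun n => {b | |φ b| ≤ n}.indicator φ,
    fun n => hφ.indicator (measurableSet_le hφ.abs measurable_const),
    fun n => ⟨n, fun b => ?_⟩, fun n b => ?_, fun b => ?_⟩
  · by_cases h : |φ b| ≤ n <;> simp [h]
  · by_cases h : |φ b| ≤ n <;> simp [h]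
  · refine tendsto_atTop_of_eventually_const (i₀ := ⌈|φ b|⌉₊) fun n hn => ?_
    have hb : b ∈ {b | |φ b| ≤ n} := (Nat.le_ceil _).trans (Nat.cast_le.2 hn)
    exact Set.indicator_of_mem hb φ

section CondExp

variable {Ω β : Type*} {m m0 : MeasurableSpace Ω} {μ : Measure Ω} [IsFiniteMeasure μ]
  [MeasurableSpace β]

theorem condExp_mul_comp_of_forall_bounded (hm : m ≤ m0) {U c : Ω → ℝ} {Z : Ω → β}
    {CU Cc : ℝ} (hU : AEStronglyMeasurable U μ) (hUb : ∀ᵐ ω ∂μ, ‖U ω‖ ≤ CU)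
    (hc : StronglyMeasurable[m] c) (hcb : ∀ᵐ ω ∂μ, ‖c ω‖ ≤ Cc) (hZ : Measurable Z)
    (h : ∀ f : β → ℝ, Measurable f → (∃ C, ∀ b, |f b| ≤ C) →
      μ[fun ω => U ω * f (Z ω) | m] =ᵐ[μ] fun ω => c ω * μ[fun ω => f (Z ω) | m] ω)
    {φ : β → ℝ} (hφ : Measurable φ) (hφZ : Integrable (fun ω => φ (Z ω)) μ) :
    μ[fun ω => U ω * φ (Z ω) | m] =ᵐ[μ] fun ω => c ω * μ[fun ω => φ (Z ω) | m] ω := by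
  obtain ⟨fs, hfs, hfs_bdd, hfs_le, hfs_tendsto⟩ := hφ.exists_seq_bounded_tendsto
  have hfsZ : ∀ n, Integrable (fun ω => fs n (Z ω)) μ := fun n =>
    hφZ.norm.mono' ((hfs n).comp hZ).aestronglyMeasurable (ae_of_all _ fun ω => hfs_le n _)
  have hpull : ∀ {g : Ω → ℝ}, Integrable g μ →
      μ[fun ω => c ω * g ω | m] =ᵐ[μ] fun ω => c ω * μ[g | m] ω := fun hg =>
    condExp_stronglyMeasurable_mul_of_bound hm hc hg Cc hcb
  refine (tendsto_condExp_unique (fun n ω => U ω * fs n (Z ω)) (fun n ω => c ω * fs n (Z ω))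
    _ _ (fun n => (hfsZ n).bdd_mul hU hUb)
    (fun n => (hfsZ n).bdd_mul (hc.mono hm).aestronglyMeasurable hcb)
    (ae_of_all _ fun ω => (hfs_tendsto _).const_mul _)
    (ae_of_all _ fun ω => (hfs_tendsto _).const_mul _)
    _ (hφZ.norm.const_mul CU) _ (hφZ.norm.const_mul Cc) (fun n => ?_) (fun n => ?_)
    (fun n => (h _ (hfs n) (hfs_bdd n)).trans (hpull (hfsZ n)).symm)).trans (hpull hφZ)
  · filter_upwards [hUb] with ω hω
    rw [norm_mul]
    exact mul_le_mul hω (hfs_le n _) (norm_nonneg _) ((norm_nonneg _).trans hω)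
  · filter_upwards [hcb] with ω hω
    rw [norm_mul]
    exact mul_le_mul hω (hfs_le n _) (norm_nonneg _) ((norm_nonneg _).trans hω)

theorem integral_mul_eq_integral_mul_condExp (hm : m ≤ m0) {V g : Ω → ℝ} {C : ℝ}
    (hV : AEStronglyMeasurable V μ) (hVb : ∀ᵐ ω ∂μ, ‖V ω‖ ≤ C)
    (hVg : μ[V * g | m] =ᵐ[μ] μ[V | m] * μ[g | m]) :
    ∫ ω, V ω * g ω ∂μ = ∫ ω, V ω * μ[g | m] ω ∂μ :=
  calc ∫ ω, V ω * g ω ∂μ = ∫ ω, μ[V * g | m] ω ∂μ := (integral_condExp hm).symm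
    _ = ∫ ω, (μ[V | m] * μ[g | m]) ω ∂μ := integral_congr_ae hVg
    _ = ∫ ω, μ[V * μ[g | m] | m] ω ∂μ := integral_congr_ae
      (condExp_mul_of_stronglyMeasurable_right stronglyMeasurable_condExp
        (integrable_condExp.bdd_mul hV hVb) (Integrable.of_bound hV C hVb)).symm
    _ = ∫ ω, V ω * μ[g | m] ω ∂μ := integral_condExp hm

theorem condExp_one_sub_mul (hm : m ≤ m0) {V g : Ω → ℝ} {C : ℝ}
    (hV : AEStronglyMeasurable V μ) (hVb : ∀ᵐ ω ∂μ, ‖V ω‖ ≤ C) (hg : Integrable g μ)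
    (hVg : μ[V * g | m] =ᵐ[μ] μ[V | m] * μ[g | m]) :
    μ[(1 - V) * g | m] =ᵐ[μ] μ[1 - V | m] * μ[g | m] := by
  have hV1 : μ[1 - V | m] =ᵐ[μ] 1 - μ[V | m] := by
    filter_upwards [condExp_sub (integrable_const 1) (Integrable.of_bound hV C hVb) m] with ω h
    exact h.trans (by simp [condExp_const hm])
  calc μ[(1 - V) * g | m] = μ[g - V * g | m] := by rw [one_sub_mul]
    _ =ᵐ[μ] μ[g | m] - μ[V * g | m] := condExp_sub hg (hg.bdd_mul hV hVb) m
    _ =ᵐ[μ] μ[1 - V | m] * μ[g | m] := by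
      filter_upwards [hVg, hV1] with ω h1 h2
      simp only [Pi.sub_apply, Pi.mul_apply, h1, h2, Pi.one_apply]
      ring

end CondExp

section Model

variable {Ω : Type*} [MeasurableSpace Ω] {P : Measure Ω}
  {X A G Y0 Y1 Y : Ω → ℝ} {e1 π μ0 μ1 : ℝ → ℝ}

theorem condExp_mul_outcomes_of_transportability [IsFiniteMeasure P] (hX : Measurable X)
    (hG : Measurable G) (hGbin : ∀ ω, G ω = 0 ∨ G ω = 1)
    (hY0m : Measurable Y0) (hY1m : Measurable Y1)
    (hπm : Measurable π) (hposπ : ∀ᵐ ω ∂P, 0 < π (X ω) ∧ π (X ω) < 1)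
    (htrans : ∀ f : ℝ × ℝ → ℝ, Measurable f → (∃ C, ∀ p, |f p| ≤ C) →
      P[fun ω => G ω * f (Y0 ω, Y1 ω) | mX X]
        =ᵐ[P] fun ω => π (X ω) * (P[fun ω => f (Y0 ω, Y1 ω) | mX X]) ω)
    {φ : ℝ × ℝ → ℝ} (hφ : Measurable φ) (hφY : Integrable (fun ω => φ (Y0 ω, Y1 ω)) P) :
    P[fun ω => G ω * φ (Y0 ω, Y1 ω) | mX X]
      =ᵐ[P] fun ω => π (X ω) * P[fun ω => φ (Y0 ω, Y1 ω) | mX X] ω := by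
  refine condExp_mul_comp_of_forall_bounded (m := mX X) (c := fun ω => π (X ω))
    (CU := 1) (Cc := 1) hX.comap_le hG.aestronglyMeasurable
    (ae_of_all _ fun ω => norm_le_one_of_eq_zero_or_eq_one (hGbin ω))
    ((hπm.comp (comap_measurable X)).stronglyMeasurable) ?_ (hY0m.prodMk hY1m) htrans hφ hφY
  filter_upwards [hposπ] with ω h
  exact abs_le.2 ⟨by linarith, h.2.le⟩

theorem condExp_mul_outcomes_of_unconfoundedness [IsFiniteMeasure P] (hX : Measurable X)
    (hA : Measurable A) (hG : Measurable G) (hAbin : ∀ ω, A ω = 0 ∨ A ω = 1)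
    (hGbin : ∀ ω, G ω = 0 ∨ G ω = 1)
    (hY0m : Measurable Y0) (hY1m : Measurable Y1) (he1m : Measurable e1) (hπm : Measurable π)
    (hpose : ∀ᵐ ω ∂P, 0 < e1 (X ω) ∧ e1 (X ω) < 1)
    (hposπ : ∀ᵐ ω ∂P, 0 < π (X ω) ∧ π (X ω) < 1)
    (hunconf : ∀ f : ℝ × ℝ → ℝ, Measurable f → (∃ C, ∀ p, |f p| ≤ C) →
      P[fun ω => G ω * A ω * f (Y0 ω, Y1 ω) | mX X]
        =ᵐ[P] fun ω => e1 (X ω) * (P[fun ω => G ω * f (Y0 ω, Y1 ω) | mX X]) ω)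
    (htrans : ∀ f : ℝ × ℝ → ℝ, Measurable f → (∃ C, ∀ p, |f p| ≤ C) →
      P[fun ω => G ω * f (Y0 ω, Y1 ω) | mX X]
        =ᵐ[P] fun ω => π (X ω) * (P[fun ω => f (Y0 ω, Y1 ω) | mX X]) ω)
    {φ : ℝ × ℝ → ℝ} (hφ : Measurable φ) (hφY : Integrable (fun ω => φ (Y0 ω, Y1 ω)) P) :
    P[fun ω => G ω * A ω * φ (Y0 ω, Y1 ω) | mX X]
      =ᵐ[P] fun ω => e1 (X ω) * π (X ω) * P[fun ω => φ (Y0 ω, Y1 ω) | mX X] ω := by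
  refine condExp_mul_comp_of_forall_bounded (m := mX X) (U := fun ω => G ω * A ω)
    (c := fun ω => e1 (X ω) * π (X ω)) (CU := 1) (Cc := 1) hX.comap_le
    (hG.mul hA).aestronglyMeasurable
    (ae_of_all _ fun ω => norm_le_one_of_eq_zero_or_eq_one
      (mul_eq_zero_or_eq_one (hGbin ω) (hAbin ω)))
    ((he1m.mul hπm).comp (comap_measurable X)).stronglyMeasurable ?_ (hY0m.prodMk hY1m)
    (fun f hf hfb => ?_) hφ hφY
  · filter_upwards [hpose, hposπ] with ω h h'
    rw [Real.norm_eq_abs, abs_of_pos (mul_pos h.1 h'.1)]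
    exact mul_le_one₀ h.2.le h'.1.le h'.2.le
  · filter_upwards [hunconf f hf hfb, htrans f hf hfb] with ω h1 h2
    rw [h1, h2, mul_assoc]

theorem treated_regression_ae_eq_condExp (hAbin : ∀ ω, A ω = 0 ∨ A ω = 1)
    (hcons : ∀ ω, Y ω = A ω * Y1 ω + (1 - A ω) * Y0 ω)
    (hpose : ∀ᵐ ω ∂P, 0 < e1 (X ω) ∧ e1 (X ω) < 1)
    (hposπ : ∀ᵐ ω ∂P, 0 < π (X ω) ∧ π (X ω) < 1)
    (hGAY1 : P[fun ω => G ω * A ω * Y1 ω | mX X]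
      =ᵐ[P] fun ω => e1 (X ω) * π (X ω) * P[Y1 | mX X] ω)
    (hμ1 : (fun ω => μ1 (X ω) * e1 (X ω) * π (X ω)) =ᵐ[P]
      P[fun ω => A ω * G ω * Y ω | mX X]) :
    (fun ω => μ1 (X ω)) =ᵐ[P] P[Y1 | mX X] := by
  have hY : (fun ω => A ω * G ω * Y ω) =ᵐ[P] fun ω => G ω * A ω * Y1 ω :=
    ae_of_all _ fun ω => by rcases hAbin ω with h | h <;> simp [hcons ω, h, mul_comm]
  filter_upwards [hμ1, condExp_congr_ae hY, hGAY1, hpose, hposπ] with ω h1 h2 h3 he hπ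
  exact mul_left_cancel₀ (mul_pos he.1 hπ.1).ne' (by linear_combination h1 + h2 + h3)

theorem control_regression_ae_eq_condExp [IsFiniteMeasure P] (hA : Measurable A)
    (hG : Measurable G) (hAbin : ∀ ω, A ω = 0 ∨ A ω = 1) (hGbin : ∀ ω, G ω = 0 ∨ G ω = 1)
    (hY0 : Integrable Y0 P) (hcons : ∀ ω, Y ω = A ω * Y1 ω + (1 - A ω) * Y0 ω)
    (hpose : ∀ᵐ ω ∂P, 0 < e1 (X ω) ∧ e1 (X ω) < 1)
    (hposπ : ∀ᵐ ω ∂P, 0 < π (X ω) ∧ π (X ω) < 1)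
    (hGY0 : P[fun ω => G ω * Y0 ω | mX X] =ᵐ[P] fun ω => π (X ω) * P[Y0 | mX X] ω)
    (hGAY0 : P[fun ω => G ω * A ω * Y0 ω | mX X]
      =ᵐ[P] fun ω => e1 (X ω) * π (X ω) * P[Y0 | mX X] ω)
    (hμ0 : (fun ω => μ0 (X ω) * (1 - e1 (X ω)) * π (X ω)) =ᵐ[P]
      P[fun ω => (1 - A ω) * G ω * Y ω | mX X]) :
    (fun ω => μ0 (X ω)) =ᵐ[P] P[Y0 | mX X] := by
  have hY : (fun ω => (1 - A ω) * G ω * Y ω)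
      =ᵐ[P] (fun ω => G ω * Y0 ω) - fun ω => G ω * A ω * Y0 ω :=
    ae_of_all _ fun ω => by rcases hAbin ω with h | h <;> simp [hcons ω, h]
  have hsub := condExp_sub (m := mX X)
    (hY0.bdd_mul hG.aestronglyMeasurable
      (ae_of_all _ fun ω => norm_le_one_of_eq_zero_or_eq_one (hGbin ω)))
    (hY0.bdd_mul (f := fun ω => G ω * A ω) (hG.mul hA).aestronglyMeasurable
      (ae_of_all _ fun ω => norm_le_one_of_eq_zero_or_eq_one
        (mul_eq_zero_or_eq_one (hGbin ω) (hAbin ω))))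
  filter_upwards [hμ0, condExp_congr_ae hY, hsub, hGY0, hGAY0, hpose, hposπ]
    with ω h1 h2 h3 h4 h5 he hπ
  rw [Pi.sub_apply] at h3
  exact mul_left_cancel₀ (mul_pos (sub_pos.2 he.2) hπ.1).ne'
    (by linear_combination h1 + h2 + h3 + h4 - h5)

end Model

theorem target_ate_identification_general
    {Ω : Type*} [MeasurableSpace Ω] (P : Measure Ω) [IsProbabilityMeasure P]
    (X A G Y0 Y1 Y : Ω → ℝ)
    (hX : Measurable X) (hA : Measurable A) (hG : Measurable G)
    (hY0m : Measurable Y0) (hY1m : Measurable Y1)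
    (hY0 : Integrable Y0 P) (hY1 : Integrable Y1 P)
    (hAbin : ∀ ω, A ω = 0 ∨ A ω = 1) (hGbin : ∀ ω, G ω = 0 ∨ G ω = 1)
    (hcons : ∀ ω, Y ω = A ω * Y1 ω + (1 - A ω) * Y0 ω)
    (e1 π μ0 μ1 : ℝ → ℝ)
    (he1m : Measurable e1) (hπm : Measurable π)
    (hπ : (fun ω => π (X ω)) =ᵐ[P] P[G | mX X])
    (hpose : ∀ᵐ ω ∂P, 0 < e1 (X ω) ∧ e1 (X ω) < 1)
    (hposπ : ∀ᵐ ω ∂P, 0 < π (X ω) ∧ π (X ω) < 1)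
    (hunconf : ∀ f : ℝ × ℝ → ℝ, Measurable f → (∃ C, ∀ p, |f p| ≤ C) →
      P[fun ω => G ω * A ω * f (Y0 ω, Y1 ω) | mX X]
        =ᵐ[P] fun ω => e1 (X ω) * (P[fun ω => G ω * f (Y0 ω, Y1 ω) | mX X]) ω)
    (htrans : ∀ f : ℝ × ℝ → ℝ, Measurable f → (∃ C, ∀ p, |f p| ≤ C) →
      P[fun ω => G ω * f (Y0 ω, Y1 ω) | mX X]
        =ᵐ[P] fun ω => π (X ω) * (P[fun ω => f (Y0 ω, Y1 ω) | mX X]) ω)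
    (hμ1 : (fun ω => μ1 (X ω) * e1 (X ω) * π (X ω)) =ᵐ[P]
      P[fun ω => A ω * G ω * Y ω | mX X])
    (hμ0 : (fun ω => μ0 (X ω) * (1 - e1 (X ω)) * π (X ω)) =ᵐ[P]
      P[fun ω => (1 - A ω) * G ω * Y ω | mX X]) :
    ∫ ω, (1 - G ω) * (Y1 ω - Y0 ω) ∂P
      = ∫ ω, (1 - G ω) * (μ1 (X ω) - μ0 (X ω)) ∂P := by
  have hGφ := fun φ => condExp_mul_outcomes_of_transportability (φ := φ)
    hX hG hGbin hY0m hY1m hπm hposπ htrans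
  have hGAφ := fun φ => condExp_mul_outcomes_of_unconfoundedness (φ := φ)
    hX hA hG hAbin hGbin hY0m hY1m he1m hπm hpose hposπ hunconf htrans
  have hμ1Y1 := treated_regression_ae_eq_condExp hAbin hcons hpose hposπ
    (hGAφ Prod.snd measurable_snd hY1) hμ1
  have hμ0Y0 := control_regression_ae_eq_condExp hA hG hAbin hGbin hY0 hcons hpose hposπ
    (hGφ Prod.fst measurable_fst hY0) (hGAφ Prod.fst measurable_fst hY0) hμ0
  have hGY : P[G * (Y1 - Y0) | mX X] =ᵐ[P] P[G | mX X] * P[Y1 - Y0 | mX X] := by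
    filter_upwards [hGφ (fun p => p.2 - p.1) (measurable_snd.sub measurable_fst) (hY1.sub hY0),
      hπ] with ω h1 h2
    rw [Pi.mul_apply, ← h2]
    exact h1
  calc ∫ ω, (1 - G ω) * (Y1 ω - Y0 ω) ∂P
      = ∫ ω, (1 - G ω) * P[Y1 - Y0 | mX X] ω ∂P :=
        integral_mul_eq_integral_mul_condExp hX.comap_le (C := 1)
          (measurable_const.sub hG).aestronglyMeasurable
          (ae_of_all _ fun ω => by rcases hGbin ω with h | h <;> simp [h])
          (condExp_one_sub_mul hX.comap_le hG.aestronglyMeasurable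
            (ae_of_all _ fun ω => norm_le_one_of_eq_zero_or_eq_one (hGbin ω))
            (hY1.sub hY0) hGY)
    _ = ∫ ω, (1 - G ω) * (μ1 (X ω) - μ0 (X ω)) ∂P := integral_congr_ae <| by
        filter_upwards [condExp_sub hY1 hY0 (mX X), hμ1Y1, hμ0Y0] with ω h h1 h0
        rw [h, Pi.sub_apply, ← h1, ← h0]

theorem target_ate_identification
    {Ω : Type*} [MeasurableSpace Ω] (P : Measure Ω) [IsProbabilityMeasure P]
    (X A G Y0 Y1 Y : Ω → ℝ)
    (hX : Measurable X) (hA : Measurable A) (hG : Measurable G)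
    (hY0m : Measurable Y0) (hY1m : Measurable Y1)
    (hY0 : Integrable Y0 P) (hY1 : Integrable Y1 P)
    (hAbin : ∀ ω, A ω = 0 ∨ A ω = 1) (hGbin : ∀ ω, G ω = 0 ∨ G ω = 1)
    (hcons : ∀ ω, Y ω = A ω * Y1 ω + (1 - A ω) * Y0 ω)
    (e1 π μ0 μ1 : ℝ → ℝ)
    (he1m : Measurable e1) (hπm : Measurable π)
    (hμ0m : Measurable μ0) (hμ1m : Measurable μ1)
    (hπ : (fun ω => π (X ω)) =ᵐ[P] P[G | mX X])
    (he1 : (fun ω => e1 (X ω) * π (X ω)) =ᵐ[P] P[fun ω => A ω * G ω | mX X])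
    (hpose : ∀ᵐ ω ∂P, 0 < e1 (X ω) ∧ e1 (X ω) < 1)
    (hposπ : ∀ᵐ ω ∂P, 0 < π (X ω) ∧ π (X ω) < 1)
    (hunconf : ∀ f : ℝ × ℝ → ℝ, Measurable f → (∃ C, ∀ p, |f p| ≤ C) →
      P[fun ω => G ω * A ω * f (Y0 ω, Y1 ω) | mX X]
        =ᵐ[P] fun ω => e1 (X ω) * (P[fun ω => G ω * f (Y0 ω, Y1 ω) | mX X]) ω)
    (htrans : ∀ f : ℝ × ℝ → ℝ, Measurable f → (∃ C, ∀ p, |f p| ≤ C) →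
      P[fun ω => G ω * f (Y0 ω, Y1 ω) | mX X]
        =ᵐ[P] fun ω => π (X ω) * (P[fun ω => f (Y0 ω, Y1 ω) | mX X]) ω)
    (hμ1 : (fun ω => μ1 (X ω) * e1 (X ω) * π (X ω)) =ᵐ[P]
      P[fun ω => A ω * G ω * Y ω | mX X])
    (hμ0 : (fun ω => μ0 (X ω) * (1 - e1 (X ω)) * π (X ω)) =ᵐ[P]
      P[fun ω => (1 - A ω) * G ω * Y ω | mX X])
    (hμint : Integrable (fun ω => μ1 (X ω) - μ0 (X ω)) P) :
    ∫ ω, (1 - G ω) * (Y1 ω - Y0 ω) ∂P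
      = ∫ ω, (1 - G ω) * (μ1 (X ω) - μ0 (X ω)) ∂P :=
  target_ate_identification_general P X A G Y0 Y1 Y hX hA hG hY0m hY1m hY0 hY1 hAbin hGbin hcons e1
    π μ0 μ1 he1m hπm hπ hpose hposπ hunconf htrans hμ1 hμ0
end

section
/- The efficient influence function φ_I for the target-population ATE has mean zero: E[ (G/(1−q))·((1−π(X))/π(X))·( A(Y−μ1(X))/e1(X) − (1−A)(Y−μ0(X))/(1−e1(X)) ) + ((1−G)/(1−q))·(μ1(X) − μ0(X) − τ) ] = 0, under the identifying assumptions. -/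
/-!
Unconfoundedness and transportability are first extended from bounded to
integrable functions of `(Y0, Y1)` (truncation and dominated convergence for conditional
expectations); they then identify the outcome regressions: `μa(X) = E[Y(a) | X]` a.s.
The efficient influence function splits into three pieces. The two weighted residuals
`b(X) · 1{A = a} G (Y - μa(X))` have conditional mean zero given `X`, because `μa(X)` is the
regression of `Y` on `X` in the arm `{A = a, G = 1}`. The remaining piece
`(1 - G)(μ1(X) - μ0(X) - τ)` integrates to zero since, by transportability,
`E[(1 - G) E[Y1 - Y0 | X]] = E[(1 - G)(Y1 - Y0)] = (1 - q) τ`.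
-/

open MeasureTheory ProbabilityTheory

open Filter Topology

theorem abs_mul_le_of_abs_le_one {a b c : ℝ} (ha : |a| ≤ 1) (hb : |b| ≤ c) : |a * b| ≤ c := by
  rw [abs_mul]; nlinarith [abs_nonneg a, abs_nonneg b]

theorem abs_le_one_of_eq_zero_or_eq_one {x : ℝ} (h : x = 0 ∨ x = 1) : |x| ≤ 1 := by
  rcases h with rfl | rfl <;> simp

theorem abs_one_sub_le_one_of_eq_zero_or_eq_one {x : ℝ} (h : x = 0 ∨ x = 1) : |1 - x| ≤ 1 := by
  rcases h with rfl | rfl <;> simp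

theorem tendsto_truncation_natCast {α : Type*} (f : α → ℝ) (x : α) :
    Tendsto (fun n : ℕ => truncation f n x) atTop (𝓝 (f x)) := by
  refine tendsto_const_nhds.congr' ?_
  obtain ⟨N, hN⟩ := exists_nat_gt |f x|
  filter_upwards [eventually_ge_atTop N] with n hn
  exact (truncation_eq_self (hN.trans_le (by exact_mod_cast hn))).symm

section CondExp

variable {Ω : Type*} {m mΩ : MeasurableSpace Ω} {P : Measure Ω} [IsFiniteMeasure P]

theorem integral_mul_eq_integral_mul_condExp_s4 (hm : m ≤ mΩ) {b f : Ω → ℝ}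
    (hb : StronglyMeasurable[m] b) (hf : Integrable f P)
    (hbf : Integrable (fun ω => b ω * f ω) P) :
    ∫ ω, b ω * f ω ∂P = ∫ ω, b ω * P[f | m] ω ∂P := by
  rw [← integral_condExp hm]
  exact integral_congr_ae (condExp_mul_of_stronglyMeasurable_left hb hbf hf)

theorem integral_mul_residual_eq_zero (hm : m ≤ mΩ) {b W Y M c : Ω → ℝ}
    (hb : StronglyMeasurable[m] b) (hW : Measurable W) (hW1 : ∀ ω, |W ω| ≤ 1)
    (hY : Integrable Y P) (hM : StronglyMeasurable[m] M) (hMi : Integrable M P)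
    (hc : c =ᵐ[P] P[W | m]) (hWY : (fun ω => M ω * c ω) =ᵐ[P] P[fun ω => W ω * Y ω | m])
    (hbWYM : Integrable (fun ω => b ω * (W ω * (Y ω - M ω))) P) :
    ∫ ω, b ω * (W ω * (Y ω - M ω)) ∂P = 0 := by
  have hW1' : ∀ᵐ ω ∂P, ‖W ω‖ ≤ 1 := .of_forall hW1
  have hWi : Integrable W P := .of_bound hW.aestronglyMeasurable 1 hW1'
  have hWYi : Integrable (fun ω => W ω * Y ω) P := hY.bdd_mul hW.aestronglyMeasurable hW1'
  have hMWi : Integrable (M * W) P := by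
    rw [mul_comm]; exact hMi.bdd_mul hW.aestronglyMeasurable hW1'
  have hsplit : (fun ω => W ω * (Y ω - M ω)) = (fun ω => W ω * Y ω) - M * W := by
    ext ω; simp only [Pi.sub_apply, Pi.mul_apply]; ring
  have hres : P[fun ω => W ω * (Y ω - M ω) | m] =ᵐ[P] 0 := by
    filter_upwards [hsplit ▸ condExp_sub hWYi hMWi m, hc, hWY,
      condExp_mul_of_stronglyMeasurable_left hM hMWi hWi] with ω hsub hcω hWYω hpull
    simp only [hsub, Pi.sub_apply, ← hWYω, hpull, Pi.mul_apply, hcω, sub_self, Pi.zero_apply]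
  rw [integral_mul_eq_integral_mul_condExp_s4 hm hb (hsplit ▸ hWYi.sub hMWi) hbWYM]
  refine integral_eq_zero_of_ae ?_
  filter_upwards [hres] with ω h
  simp [h]

theorem condExp_mul_comp_ae_eq_of_forall_bounded (hm : m ≤ mΩ) {E : Type*} [MeasurableSpace E]
    {V : Ω → E} {B B' ρ : Ω → ℝ} (hV : Measurable V) (hB : Measurable B) (hB' : Measurable B')
    (hB1 : ∀ ω, |B ω| ≤ 1) (hB'1 : ∀ ω, |B' ω| ≤ 1)
    (hρ : StronglyMeasurable[m] ρ) (hρ1 : ∀ᵐ ω ∂P, |ρ ω| ≤ 1)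
    (h : ∀ f : E → ℝ, Measurable f → (∃ C, ∀ p, |f p| ≤ C) →
      P[fun ω => B ω * f (V ω) | m] =ᵐ[P] fun ω => ρ ω * P[fun ω => B' ω * f (V ω) | m] ω)
    {g : E → ℝ} (hg : Measurable g) (hgV : Integrable (fun ω => g (V ω)) P) :
    P[fun ω => B ω * g (V ω) | m] =ᵐ[P] fun ω => ρ ω * P[fun ω => B' ω * g (V ω) | m] ω := by
  have hdom : ∀ {Z : Ω → ℝ}, AEStronglyMeasurable Z P → (∀ᵐ ω ∂P, |Z ω| ≤ |g (V ω)|) →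
      Integrable Z P := fun hZ hZg => hgV.abs.mono' hZ hZg
  have hpull : ∀ f : E → ℝ, Measurable f → (∀ p, |f p| ≤ |g p|) →
      P[fun ω => ρ ω * (B' ω * f (V ω)) | m] =ᵐ[P]
        fun ω => ρ ω * P[fun ω => B' ω * f (V ω) | m] ω := fun f hf hfg =>
    condExp_stronglyMeasurable_mul_of_bound hm hρ
      (hdom (hB'.mul (hf.comp hV)).aestronglyMeasurable
        (.of_forall fun ω => abs_mul_le_of_abs_le_one (hB'1 ω) (hfg _))) 1 hρ1
  have htrunc : ∀ n : ℕ, Measurable (truncation g n) :=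
    fun n => (measurable_id.indicator measurableSet_Ioc).comp hg
  have htrunc_le : ∀ (n : ℕ) p, |truncation g n p| ≤ |g p| :=
    fun n => abs_truncation_le_abs_self g n
  have hB_le : ∀ (n : ℕ) ω, |B ω * truncation g n (V ω)| ≤ |g (V ω)| :=
    fun n ω => abs_mul_le_of_abs_le_one (hB1 ω) (htrunc_le n _)
  have hρ_le : ∀ n : ℕ, ∀ᵐ ω ∂P, |ρ ω * (B' ω * truncation g n (V ω))| ≤ |g (V ω)| :=
    fun n => hρ1.mono fun ω hω =>
      abs_mul_le_of_abs_le_one hω (abs_mul_le_of_abs_le_one (hB'1 ω) (htrunc_le n _))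
  -- With `ρ` moved inside, both sides are conditional expectations of truncations
  -- dominated by `|g ∘ V|`, so the identity passes to the limit.
  refine (tendsto_condExp_unique (fun n ω => B ω * truncation g n (V ω))
    (fun n ω => ρ ω * (B' ω * truncation g n (V ω))) _ _
    (fun n => hdom (hB.mul ((htrunc n).comp hV)).aestronglyMeasurable (.of_forall (hB_le n)))
    (fun n => hdom ((hρ.mono hm).measurable.mul (hB'.mul ((htrunc n).comp hV))).aestronglyMeasurable
      (hρ_le n))
    (.of_forall fun ω => (tendsto_truncation_natCast g (V ω)).const_mul (B ω))
    (.of_forall fun ω => ((tendsto_truncation_natCast g (V ω)).const_mul (B' ω)).const_mul (ρ ω))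
    _ hgV.abs _ hgV.abs (fun n => .of_forall (hB_le n)) hρ_le fun n => ?_).trans
    (hpull g hg fun _ => le_rfl)
  exact (h _ (htrunc n) ⟨n, fun p => (abs_truncation_le_bound g n p).trans_eq (by simp)⟩).trans
    (hpull _ (htrunc n) (htrunc_le n)).symm

theorem integral_one_sub_mul_condExp_eq (hm : m ≤ mΩ) {G Z π : Ω → ℝ} (hG : Measurable G)
    (hG1 : ∀ ω, |G ω| ≤ 1) (hZ : Integrable Z P) (hπ : π =ᵐ[P] P[G | m])
    (h : P[fun ω => G ω * Z ω | m] =ᵐ[P] fun ω => π ω * P[Z | m] ω) :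
    ∫ ω, (1 - G ω) * P[Z | m] ω ∂P = ∫ ω, (1 - G ω) * Z ω ∂P := by
  have hG1' : ∀ᵐ ω ∂P, ‖G ω‖ ≤ 1 := .of_forall hG1
  have hGZ : Integrable (fun ω => G ω * Z ω) P := hZ.bdd_mul hG.aestronglyMeasurable hG1'
  have hGM : Integrable (fun ω => G ω * P[Z | m] ω) P :=
    integrable_condExp.bdd_mul hG.aestronglyMeasurable hG1'
  have hweight : ∫ ω, G ω * P[Z | m] ω ∂P = ∫ ω, G ω * Z ω ∂P := calc
    _ = ∫ ω, P[Z | m] ω * G ω ∂P := by simp only [mul_comm]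
    _ = ∫ ω, P[Z | m] ω * P[G | m] ω ∂P :=
        integral_mul_eq_integral_mul_condExp_s4 hm stronglyMeasurable_condExp
          (.of_bound hG.aestronglyMeasurable 1 hG1') (by simpa only [mul_comm] using hGM)
    _ = ∫ ω, P[fun ω => G ω * Z ω | m] ω ∂P := integral_congr_ae <| by
        filter_upwards [hπ, h] with ω hπω hω
        rw [hω, hπω, mul_comm]
    _ = ∫ ω, G ω * Z ω ∂P := integral_condExp hm
  simp only [one_sub_mul]
  rw [integral_sub integrable_condExp hGM, integral_sub hZ hGZ, hweight, integral_condExp hm]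

end CondExp

section Setting

variable {Ω : Type*} {m mΩ : MeasurableSpace Ω} {P : Measure Ω}

theorem integral_eq_measureReal_of_eq_zero_or_eq_one {G : Ω → ℝ} (hG : Measurable G)
    (hGbin : ∀ ω, G ω = 0 ∨ G ω = 1) : ∫ ω, G ω ∂P = P.real {ω | G ω = 1} := by
  have hGind : G = {ω | G ω = 1}.indicator 1 := by
    ext ω; rcases hGbin ω with h | h <;> simp [h]
  conv_lhs => rw [hGind]
  exact integral_indicator_one (hG (measurableSet_singleton 1))

theorem integrable_of_eq_mul_add_one_sub_mul {A Y0 Y1 Y : Ω → ℝ} (hA : Measurable A)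
    (hAbin : ∀ ω, A ω = 0 ∨ A ω = 1) (hcons : ∀ ω, Y ω = A ω * Y1 ω + (1 - A ω) * Y0 ω)
    (hY0 : Integrable Y0 P) (hY1 : Integrable Y1 P) : Integrable Y P :=
  (hY1.bdd_mul hA.aestronglyMeasurable
    (.of_forall fun ω => abs_le_one_of_eq_zero_or_eq_one (hAbin ω))).add
    (hY0.bdd_mul (f := fun ω => 1 - A ω) (measurable_const.sub hA).aestronglyMeasurable
      (.of_forall fun ω => abs_one_sub_le_one_of_eq_zero_or_eq_one (hAbin ω)))
    |>.congr (.of_forall fun ω => (hcons ω).symm)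

theorem integrable_of_integrable_sub_of_eq_zero_or_eq_one {A T1 T0 : Ω → ℝ} (hA : Measurable A)
    (hAbin : ∀ ω, A ω = 0 ∨ A ω = 1) (h : Integrable (fun ω => T1 ω - T0 ω) P)
    (hT1 : ∀ ω, A ω = 0 → T1 ω = 0) (hT0 : ∀ ω, A ω = 1 → T0 ω = 0) :
    Integrable T1 P ∧ Integrable T0 P := by
  constructor
  · refine (h.bdd_mul hA.aestronglyMeasurable
      (.of_forall fun ω => abs_le_one_of_eq_zero_or_eq_one (hAbin ω))).congr
      (.of_forall fun ω => ?_)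
    rcases hAbin ω with hω | hω <;> simp [hω, hT1 ω, hT0 ω]
  · refine (h.neg.bdd_mul (f := fun ω => 1 - A ω) (measurable_const.sub hA).aestronglyMeasurable
      (.of_forall fun ω => abs_one_sub_le_one_of_eq_zero_or_eq_one (hAbin ω))).congr
      (.of_forall fun ω => ?_)
    rcases hAbin ω with hω | hω <;> simp [hω, hT1 ω, hT0 ω]

theorem condExp_one_sub_mul_ae_eq {A G e π : Ω → ℝ} (hGi : Integrable G P)
    (hAGi : Integrable (fun ω => A ω * G ω) P) (hπ : π =ᵐ[P] P[G | m])
    (he : (fun ω => e ω * π ω) =ᵐ[P] P[fun ω => A ω * G ω | m]) :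
    (fun ω => (1 - e ω) * π ω) =ᵐ[P] P[fun ω => (1 - A ω) * G ω | m] := by
  have hsplit : (fun ω => (1 - A ω) * G ω) = G - fun ω => A ω * G ω := by
    ext ω; simp only [Pi.sub_apply]; ring
  filter_upwards [hπ, he, hsplit ▸ condExp_sub hGi hAGi m] with ω hπω heω hsub
  rw [hsub, Pi.sub_apply, ← hπω, ← heω]
  ring

theorem ae_eq_condExp_of_treated {A G Y0 Y1 Y e π μ : Ω → ℝ}
    (hAbin : ∀ ω, A ω = 0 ∨ A ω = 1) (hcons : ∀ ω, Y ω = A ω * Y1 ω + (1 - A ω) * Y0 ω)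
    (hunconf : P[fun ω => G ω * A ω * Y1 ω | m] =ᵐ[P]
      fun ω => e ω * P[fun ω => G ω * Y1 ω | m] ω)
    (htrans : P[fun ω => G ω * Y1 ω | m] =ᵐ[P] fun ω => π ω * P[Y1 | m] ω)
    (hμ : (fun ω => μ ω * e ω * π ω) =ᵐ[P] P[fun ω => A ω * G ω * Y ω | m])
    (he : ∀ᵐ ω ∂P, e ω ≠ 0) (hπ : ∀ᵐ ω ∂P, π ω ≠ 0) : μ =ᵐ[P] P[Y1 | m] := by
  have hY : (fun ω => A ω * G ω * Y ω) = fun ω => G ω * A ω * Y1 ω := by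
    ext ω; rcases hAbin ω with h | h <;> simp [hcons ω, h, mul_comm]
  rw [hY] at hμ
  filter_upwards [hμ, hunconf, htrans, he, hπ] with ω hμω hunconfω htransω heω hπω
  have hcancel : (μ ω - P[Y1 | m] ω) * (e ω * π ω) = 0 := by
    linear_combination hμω.trans (hunconfω.trans (congrArg (e ω * ·) htransω))
  simpa [sub_eq_zero, heω, hπω] using hcancel

theorem ae_eq_condExp_of_control {A G Y0 Y1 Y e π μ : Ω → ℝ}
    (hAbin : ∀ ω, A ω = 0 ∨ A ω = 1) (hcons : ∀ ω, Y ω = A ω * Y1 ω + (1 - A ω) * Y0 ω)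
    (hGY0 : Integrable (fun ω => G ω * Y0 ω) P) (hGAY0 : Integrable (fun ω => G ω * A ω * Y0 ω) P)
    (hunconf : P[fun ω => G ω * A ω * Y0 ω | m] =ᵐ[P]
      fun ω => e ω * P[fun ω => G ω * Y0 ω | m] ω)
    (htrans : P[fun ω => G ω * Y0 ω | m] =ᵐ[P] fun ω => π ω * P[Y0 | m] ω)
    (hμ : (fun ω => μ ω * (1 - e ω) * π ω) =ᵐ[P] P[fun ω => (1 - A ω) * G ω * Y ω | m])
    (he : ∀ᵐ ω ∂P, 1 - e ω ≠ 0) (hπ : ∀ᵐ ω ∂P, π ω ≠ 0) : μ =ᵐ[P] P[Y0 | m] := by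
  have hY : (fun ω => (1 - A ω) * G ω * Y ω) =
      (fun ω => G ω * Y0 ω) - fun ω => G ω * A ω * Y0 ω := by
    ext ω; rcases hAbin ω with h | h <;> simp [hcons ω, h, mul_comm]
  rw [hY] at hμ
  filter_upwards [hμ, condExp_sub hGY0 hGAY0 m, hunconf, htrans, he, hπ]
    with ω hμω hsub hunconfω htransω heω hπω
  have hcancel : (μ ω - P[Y0 | m] ω) * ((1 - e ω) * π ω) = 0 := by
    rw [hsub, Pi.sub_apply, hunconfω, htransω] at hμω
    linear_combination hμω
  simpa [sub_eq_zero, heω, hπω] using hcancel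

theorem integral_target_term_eq_zero [IsProbabilityMeasure P] (hm : m ≤ mΩ)
    {G Y0 Y1 π μ0 μ1 : Ω → ℝ} {q τ : ℝ} (hG : Measurable G) (hGbin : ∀ ω, G ω = 0 ∨ G ω = 1)
    (hY0 : Integrable Y0 P) (hY1 : Integrable Y1 P) (hπ : π =ᵐ[P] P[G | m])
    (htrans : P[fun ω => G ω * (Y1 ω - Y0 ω) | m] =ᵐ[P]
      fun ω => π ω * P[Y1 - Y0 | m] ω)
    (hμ0 : μ0 =ᵐ[P] P[Y0 | m]) (hμ1 : μ1 =ᵐ[P] P[Y1 | m])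
    (hq : q = P.real {ω | G ω = 1}) (hq1 : q ≠ 1)
    (hτ : τ = (∫ ω, (1 - G ω) * (Y1 ω - Y0 ω) ∂P) / (1 - q)) :
    ∫ ω, (1 - G ω) * (μ1 ω - μ0 ω - τ) ∂P = 0 := by
  have hG1 : ∀ ω, |G ω| ≤ 1 := fun ω => abs_le_one_of_eq_zero_or_eq_one (hGbin ω)
  have h1G1 : ∀ ω, |1 - G ω| ≤ 1 := fun ω => abs_one_sub_le_one_of_eq_zero_or_eq_one (hGbin ω)
  have h1G : Integrable (fun ω => 1 - G ω) P :=
    .of_bound (measurable_const.sub hG).aestronglyMeasurable 1 (.of_forall h1G1)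
  have hmass : ∫ ω, (1 - G ω) ∂P = 1 - q := by
    rw [integral_sub (integrable_const 1) (.of_bound hG.aestronglyMeasurable 1 (.of_forall hG1)),
      integral_eq_measureReal_of_eq_zero_or_eq_one hG hGbin, hq]
    simp
  have hdiff : (fun ω => (1 - G ω) * (μ1 ω - μ0 ω - τ)) =ᵐ[P]
      fun ω => (1 - G ω) * P[Y1 - Y0 | m] ω - (1 - G ω) * τ := by
    filter_upwards [hμ0, hμ1, condExp_sub hY1 hY0 m] with ω h0 h1 hsub
    rw [hsub, Pi.sub_apply, h0, h1]
    ring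
  rw [integral_congr_ae hdiff, integral_sub (integrable_condExp.bdd_mul h1G.1 (.of_forall h1G1))
      (h1G.mul_const τ), integral_mul_const, hmass,
    integral_one_sub_mul_condExp_eq hm hG hG1 (hY1.sub hY0) hπ htrans, hτ,
    mul_div_cancel₀ _ (sub_ne_zero.2 hq1.symm)]
  exact sub_self _

theorem integral_eif_eq_zero_of_identified [IsProbabilityMeasure P] (hm : m ≤ mΩ)
    {A G Y0 Y1 Y π e μ0 μ1 φ : Ω → ℝ} {q τ : ℝ} (hA : Measurable A) (hG : Measurable G)
    (hY0 : Integrable Y0 P) (hY1 : Integrable Y1 P)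
    (hAbin : ∀ ω, A ω = 0 ∨ A ω = 1) (hGbin : ∀ ω, G ω = 0 ∨ G ω = 1)
    (hcons : ∀ ω, Y ω = A ω * Y1 ω + (1 - A ω) * Y0 ω)
    (hπm : Measurable[m] π) (hem : Measurable[m] e)
    (hμ0m : Measurable[m] μ0) (hμ1m : Measurable[m] μ1)
    (hπ : π =ᵐ[P] P[G | m]) (he : (fun ω => e ω * π ω) =ᵐ[P] P[fun ω => A ω * G ω | m])
    (hμ1 : (fun ω => μ1 ω * e ω * π ω) =ᵐ[P] P[fun ω => A ω * G ω * Y ω | m])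
    (hμ0 : (fun ω => μ0 ω * (1 - e ω) * π ω) =ᵐ[P] P[fun ω => (1 - A ω) * G ω * Y ω | m])
    (hμ0M : μ0 =ᵐ[P] P[Y0 | m]) (hμ1M : μ1 =ᵐ[P] P[Y1 | m])
    (htrans : P[fun ω => G ω * (Y1 ω - Y0 ω) | m] =ᵐ[P] fun ω => π ω * P[Y1 - Y0 | m] ω)
    (hq : q = P.real {ω | G ω = 1}) (hq1 : q < 1)
    (hτ : τ = (∫ ω, (1 - G ω) * (Y1 ω - Y0 ω) ∂P) / (1 - q))
    (hφ : ∀ ω, φ ω = G ω / (1 - q) * ((1 - π ω) / π ω) *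
        (A ω * (Y ω - μ1 ω) / e ω - (1 - A ω) * (Y ω - μ0 ω) / (1 - e ω))
      + (1 - G ω) / (1 - q) * (μ1 ω - μ0 ω - τ))
    (hφi : Integrable φ P) :
    ∫ ω, φ ω ∂P = 0 := by
  have hq1' : 1 - q ≠ 0 := sub_ne_zero.2 hq1.ne'
  have hA1 : ∀ ω, |A ω| ≤ 1 := fun ω => abs_le_one_of_eq_zero_or_eq_one (hAbin ω)
  have hG1 : ∀ ω, |G ω| ≤ 1 := fun ω => abs_le_one_of_eq_zero_or_eq_one (hGbin ω)
  set b1 : Ω → ℝ := fun ω => (1 - π ω) / π ω / e ω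
  set b0 : Ω → ℝ := fun ω => (1 - π ω) / π ω / (1 - e ω)
  set S : Ω → ℝ := fun ω => (1 - G ω) * (μ1 ω - μ0 ω - τ)
  have hdecomp : ∀ ω, (1 - q) * φ ω - S ω = b1 ω * (A ω * G ω * (Y ω - μ1 ω))
      - b0 ω * ((1 - A ω) * G ω * (Y ω - μ0 ω)) := fun ω => by
    simp only [hφ ω, S, b1, b0]
    field_simp
    ring
  have hY := integrable_of_eq_mul_add_one_sub_mul hA hAbin hcons hY0 hY1
  have hμ1i : Integrable μ1 P := integrable_condExp.congr hμ1M.symm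
  have hμ0i : Integrable μ0 P := integrable_condExp.congr hμ0M.symm
  have hSi : Integrable S P := ((hμ1i.sub' hμ0i).sub' (integrable_const τ)).bdd_mul
    (measurable_const.sub hG).aestronglyMeasurable
    (.of_forall fun ω => abs_one_sub_le_one_of_eq_zero_or_eq_one (hGbin ω))
  -- The two weighted residuals live on `{A = 1}` and `{A = 0}`; each inherits integrability
  -- from that of `φ`.
  obtain ⟨hT1, hT0⟩ := integrable_of_integrable_sub_of_eq_zero_or_eq_one hA hAbin
    (((hφi.const_mul (1 - q)).sub' hSi).congr (.of_forall hdecomp))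
    (fun ω h => by simp [h]) (fun ω h => by simp [h])
  have hGi : Integrable G P := .of_bound hG.aestronglyMeasurable 1 (.of_forall hG1)
  have htreated : ∫ ω, b1 ω * (A ω * G ω * (Y ω - μ1 ω)) ∂P = 0 :=
    integral_mul_residual_eq_zero hm
      (((measurable_const.sub hπm).div hπm).div hem).stronglyMeasurable (hA.mul hG)
      (fun ω => abs_mul_le_of_abs_le_one (hA1 ω) (hG1 ω)) hY hμ1m.stronglyMeasurable
      hμ1i he (by simpa only [mul_assoc] using hμ1) hT1
  have hcontrol : ∫ ω, b0 ω * ((1 - A ω) * G ω * (Y ω - μ0 ω)) ∂P = 0 :=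
    integral_mul_residual_eq_zero hm
      (((measurable_const.sub hπm).div hπm).div (measurable_const.sub hem)).stronglyMeasurable
      ((measurable_const.sub hA).mul hG)
      (fun ω => abs_mul_le_of_abs_le_one
        (abs_one_sub_le_one_of_eq_zero_or_eq_one (hAbin ω)) (hG1 ω))
      hY hμ0m.stronglyMeasurable hμ0i
      (condExp_one_sub_mul_ae_eq hGi (hGi.bdd_mul hA.aestronglyMeasurable (.of_forall hA1)) hπ he)
      (by simpa only [mul_assoc] using hμ0) hT0
  have hscaled : (1 - q) * ∫ ω, φ ω ∂P = 0 := by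
    rw [← integral_const_mul,
      integral_congr_ae (.of_forall fun ω => sub_eq_iff_eq_add.1 (hdecomp ω)),
      integral_add (hT1.sub' hT0) hSi, integral_sub hT1 hT0, htreated, hcontrol,
      integral_target_term_eq_zero hm hG hGbin hY0 hY1 hπ htrans hμ0M hμ1M hq hq1.ne hτ]
    simp
  exact (mul_eq_zero.1 hscaled).resolve_left hq1'

end Setting

theorem eif_setting_I_mean_zero_general
    {Ω : Type*} [MeasurableSpace Ω] (P : Measure Ω) [IsProbabilityMeasure P]
    (X A G Y0 Y1 Y : Ω → ℝ)
    (hX : Measurable X) (hA : Measurable A) (hG : Measurable G)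
    (hY0m : Measurable Y0) (hY1m : Measurable Y1)
    (hY0 : Integrable Y0 P) (hY1 : Integrable Y1 P)
    (hAbin : ∀ ω, A ω = 0 ∨ A ω = 1) (hGbin : ∀ ω, G ω = 0 ∨ G ω = 1)
    (hcons : ∀ ω, Y ω = A ω * Y1 ω + (1 - A ω) * Y0 ω)
    (e1 π μ0 μ1 : ℝ → ℝ)
    (he1m : Measurable e1) (hπm : Measurable π)
    (hμ0m : Measurable μ0) (hμ1m : Measurable μ1)
    (hπ : (fun ω => π (X ω)) =ᵐ[P] P[G | mX X])
    (he1 : (fun ω => e1 (X ω) * π (X ω)) =ᵐ[P] P[fun ω => A ω * G ω | mX X])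
    (hpose : ∀ᵐ ω ∂P, 0 < e1 (X ω) ∧ e1 (X ω) < 1)
    (hposπ : ∀ᵐ ω ∂P, 0 < π (X ω) ∧ π (X ω) < 1)
    (hunconf : ∀ f : ℝ × ℝ → ℝ, Measurable f → (∃ C, ∀ p, |f p| ≤ C) →
      P[fun ω => G ω * A ω * f (Y0 ω, Y1 ω) | mX X]
        =ᵐ[P] fun ω => e1 (X ω) * (P[fun ω => G ω * f (Y0 ω, Y1 ω) | mX X]) ω)
    (htrans : ∀ f : ℝ × ℝ → ℝ, Measurable f → (∃ C, ∀ p, |f p| ≤ C) →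
      P[fun ω => G ω * f (Y0 ω, Y1 ω) | mX X]
        =ᵐ[P] fun ω => π (X ω) * (P[fun ω => f (Y0 ω, Y1 ω) | mX X]) ω)
    (hμ1 : (fun ω => μ1 (X ω) * e1 (X ω) * π (X ω)) =ᵐ[P]
      P[fun ω => A ω * G ω * Y ω | mX X])
    (hμ0 : (fun ω => μ0 (X ω) * (1 - e1 (X ω)) * π (X ω)) =ᵐ[P]
      P[fun ω => (1 - A ω) * G ω * Y ω | mX X])
    (q τ : ℝ)
    (hq : q = (P {ω | G ω = 1}).toReal) (hq1 : q < 1)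
    (hτ : τ = (∫ ω, (1 - G ω) * (Y1 ω - Y0 ω) ∂P) / (1 - q))
    (φI : Ω → ℝ)
    (hφI : ∀ ω, φI ω =
      G ω / (1 - q) * ((1 - π (X ω)) / π (X ω)) *
        (A ω * (Y ω - μ1 (X ω)) / e1 (X ω)
          - (1 - A ω) * (Y ω - μ0 (X ω)) / (1 - e1 (X ω)))
      + (1 - G ω) / (1 - q) * (μ1 (X ω) - μ0 (X ω) - τ))
    (hφIint : Integrable φI P) :
    ∫ ω, φI ω ∂P = 0 := by
  have hm : mX X ≤ ‹MeasurableSpace Ω› := hX.comap_le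
  have hXm : Measurable[mX X] X := comap_measurable X
  have hV : Measurable fun ω => (Y0 ω, Y1 ω) := hY0m.prodMk hY1m
  have hG1 : ∀ ω, |G ω| ≤ 1 := fun ω => abs_le_one_of_eq_zero_or_eq_one (hGbin ω)
  have hGA1 : ∀ ω, |G ω * A ω| ≤ 1 := fun ω =>
    abs_mul_le_of_abs_le_one (hG1 ω) (abs_le_one_of_eq_zero_or_eq_one (hAbin ω))
  have htrans' : ∀ g : ℝ × ℝ → ℝ, Measurable g → Integrable (fun ω => g (Y0 ω, Y1 ω)) P →
      P[fun ω => G ω * g (Y0 ω, Y1 ω) | mX X] =ᵐ[P]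
        fun ω => π (X ω) * P[fun ω => g (Y0 ω, Y1 ω) | mX X] ω := fun g hg hgV => by
    simpa using condExp_mul_comp_ae_eq_of_forall_bounded (B' := 1) (ρ := fun ω => π (X ω)) hm hV
      hG measurable_const hG1 (by simp) (hπm.comp hXm).stronglyMeasurable
      (hposπ.mono fun ω h => abs_le.2 ⟨by linarith [h.1], h.2.le⟩)
      (fun f hf hC => by simpa using htrans f hf hC) hg hgV
  have hunconf' : ∀ g : ℝ × ℝ → ℝ, Measurable g → Integrable (fun ω => g (Y0 ω, Y1 ω)) P →
      P[fun ω => G ω * A ω * g (Y0 ω, Y1 ω) | mX X] =ᵐ[P]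
        fun ω => e1 (X ω) * P[fun ω => G ω * g (Y0 ω, Y1 ω) | mX X] ω := fun g hg hgV =>
    condExp_mul_comp_ae_eq_of_forall_bounded (ρ := fun ω => e1 (X ω)) hm hV (hG.mul hA) hG hGA1
      hG1 (he1m.comp hXm).stronglyMeasurable
      (hpose.mono fun ω h => abs_le.2 ⟨by linarith [h.1], h.2.le⟩) hunconf hg hgV
  have hπ0 : ∀ᵐ ω ∂P, π (X ω) ≠ 0 := hposπ.mono fun ω h => h.1.ne'
  have hμ1M : (fun ω => μ1 (X ω)) =ᵐ[P] P[Y1 | mX X] :=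
    ae_eq_condExp_of_treated hAbin hcons (hunconf' Prod.snd measurable_snd hY1)
      (htrans' Prod.snd measurable_snd hY1) hμ1 (hpose.mono fun ω h => h.1.ne') hπ0
  have hμ0M : (fun ω => μ0 (X ω)) =ᵐ[P] P[Y0 | mX X] :=
    ae_eq_condExp_of_control hAbin hcons
      (hY0.bdd_mul hG.aestronglyMeasurable (.of_forall hG1))
      (hY0.bdd_mul (hG.mul hA).aestronglyMeasurable (.of_forall hGA1))
      (hunconf' Prod.fst measurable_fst hY0) (htrans' Prod.fst measurable_fst hY0) hμ0
      (hpose.mono fun ω h => (sub_pos.2 h.2).ne') hπ0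
  exact integral_eif_eq_zero_of_identified hm hA hG hY0 hY1 hAbin hGbin hcons (hπm.comp hXm)
    (he1m.comp hXm) (hμ0m.comp hXm) (hμ1m.comp hXm) hπ he1 hμ1 hμ0 hμ0M hμ1M
    (htrans' _ (measurable_snd.sub measurable_fst) (hY1.sub hY0)) hq hq1 hτ hφI hφIint

theorem eif_setting_I_mean_zero
    {Ω : Type*} [MeasurableSpace Ω] (P : Measure Ω) [IsProbabilityMeasure P]
    (X A G Y0 Y1 Y : Ω → ℝ)
    (hX : Measurable X) (hA : Measurable A) (hG : Measurable G)
    (hY0m : Measurable Y0) (hY1m : Measurable Y1)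
    (hY0 : Integrable Y0 P) (hY1 : Integrable Y1 P)
    (hAbin : ∀ ω, A ω = 0 ∨ A ω = 1) (hGbin : ∀ ω, G ω = 0 ∨ G ω = 1)
    (hcons : ∀ ω, Y ω = A ω * Y1 ω + (1 - A ω) * Y0 ω)
    (e1 π μ0 μ1 : ℝ → ℝ)
    (he1m : Measurable e1) (hπm : Measurable π)
    (hμ0m : Measurable μ0) (hμ1m : Measurable μ1)
    (hπ : (fun ω => π (X ω)) =ᵐ[P] P[G | mX X])
    (he1 : (fun ω => e1 (X ω) * π (X ω)) =ᵐ[P] P[fun ω => A ω * G ω | mX X])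
    (hpose : ∀ᵐ ω ∂P, 0 < e1 (X ω) ∧ e1 (X ω) < 1)
    (hposπ : ∀ᵐ ω ∂P, 0 < π (X ω) ∧ π (X ω) < 1)
    (hunconf : ∀ f : ℝ × ℝ → ℝ, Measurable f → (∃ C, ∀ p, |f p| ≤ C) →
      P[fun ω => G ω * A ω * f (Y0 ω, Y1 ω) | mX X]
        =ᵐ[P] fun ω => e1 (X ω) * (P[fun ω => G ω * f (Y0 ω, Y1 ω) | mX X]) ω)
    (htrans : ∀ f : ℝ × ℝ → ℝ, Measurable f → (∃ C, ∀ p, |f p| ≤ C) →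
      P[fun ω => G ω * f (Y0 ω, Y1 ω) | mX X]
        =ᵐ[P] fun ω => π (X ω) * (P[fun ω => f (Y0 ω, Y1 ω) | mX X]) ω)
    (hμ1 : (fun ω => μ1 (X ω) * e1 (X ω) * π (X ω)) =ᵐ[P]
      P[fun ω => A ω * G ω * Y ω | mX X])
    (hμ0 : (fun ω => μ0 (X ω) * (1 - e1 (X ω)) * π (X ω)) =ᵐ[P]
      P[fun ω => (1 - A ω) * G ω * Y ω | mX X])
    (q τ : ℝ)
    (hq : q = (P {ω | G ω = 1}).toReal) (hq0 : 0 < q) (hq1 : q < 1)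
    (hτ : τ = (∫ ω, (1 - G ω) * (Y1 ω - Y0 ω) ∂P) / (1 - q))
    (φI : Ω → ℝ)
    (hφI : ∀ ω, φI ω =
      G ω / (1 - q) * ((1 - π (X ω)) / π (X ω)) *
        (A ω * (Y ω - μ1 (X ω)) / e1 (X ω)
          - (1 - A ω) * (Y ω - μ0 (X ω)) / (1 - e1 (X ω)))
      + (1 - G ω) / (1 - q) * (μ1 (X ω) - μ0 (X ω) - τ))
    (hφIint : Integrable φI P) :
    ∫ ω, φI ω ∂P = 0 :=
  eif_setting_I_mean_zero_general P X A G Y0 Y1 Y hX hA hG hY0m hY1m hY0 hY1 hAbin hGbin hcons e1 π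
    μ0 μ1 he1m hπm hμ0m hμ1m hπ he1 hpose hposπ hunconf htrans hμ1 hμ0 q τ hq hq1 hτ φI hφI hφIint
end

section
/- Double robustness identity (propensity side): if the true outcome regressions μ1(X), μ0(X) are used, but arbitrary measurable functions ẽ(X) ∈ (0,1) and π̃(X) ∈ (0,1) (bounded away from 0 and 1) replace e1(X) and π(X), then E[ (G/(1−q))·((1−π̃(X))/π̃(X))·( A(Y−μ1(X))/ẽ(X) − (1−A)(Y−μ0(X))/(1−ẽ(X)) ) + ((1−G)/(1−q))·(μ1(X) − μ0(X)) ] = τ. -/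
/-!
Every term of the score other than `(1 - G) (Y₁ - Y₀) / (1 - q)` is a conditionally centred
residual given `X`, up to a bounded `X`-measurable weight. For `A G (Y - μ₁(X))` and
`(1 - A) G (Y - μ₀(X))` this is the defining property of the outcome regressions, whatever the
working propensities `ẽ, π̃` are. For `(1 - G) (Y_a - μ_a(X))` it follows from
`μ_a(X) = E[Y_a | X]`, which unconfoundedness and transportability give once they are extended
from bounded to integrable functions of the potential outcomes by truncation. Centred residuals
integrate to zero, leaving `E[(1 - G)(Y₁ - Y₀)] / (1 - q) = τ`.
-/

open MeasureTheory ProbabilityTheory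

open Filter Set Topology

lemma tendsto_indicator_Icc_id (x : ℝ) :
    Tendsto (fun n : ℕ => (Icc (-(n : ℝ)) n).indicator id x) atTop (𝓝 x) := by
  obtain ⟨N, hN⟩ := exists_nat_ge |x|
  refine tendsto_const_nhds.congr' (eventually_atTop.mpr ⟨N, fun n hn => ?_⟩)
  exact (indicator_of_mem (s := Icc (-(n : ℝ)) n)
    (abs_le.mp (hN.trans (Nat.cast_le.mpr hn))) id).symm

lemma abs_indicator_Icc_id_le (n : ℕ) (x : ℝ) : |(Icc (-(n : ℝ)) n).indicator id x| ≤ n := by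
  by_cases hx : x ∈ Icc (-(n : ℝ)) n
  · rw [indicator_of_mem hx, id, abs_le]
    exact hx
  · rw [indicator_of_notMem hx, abs_zero]
    exact n.cast_nonneg

lemma norm_le_one_of_isIdempotentElem {a : ℝ} (h : IsIdempotentElem a) : ‖a‖ ≤ 1 := by
  rcases IsIdempotentElem.iff_eq_zero_or_one.mp h with rfl | rfl <;> simp

lemma norm_one_sub_div_div_le {ε p t : ℝ} (hε : 0 < ε) (hp : ε ≤ p) (hp₁ : p ≤ 1)
    (ht : ε ≤ t) : ‖(1 - p) / p / t‖ ≤ (ε * ε)⁻¹ := by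
  have hp₀ : 0 < p := hε.trans_le hp
  have ht₀ : 0 < t := hε.trans_le ht
  rw [Real.norm_eq_abs, abs_of_nonneg (div_nonneg (div_nonneg (sub_nonneg.mpr hp₁) hp₀.le) ht₀.le)]
  calc (1 - p) / p / t ≤ 1 / ε / ε := by gcongr; linarith
    _ = (ε * ε)⁻¹ := by rw [div_div, one_div]

section

variable {Ω : Type*} {m m₀ : MeasurableSpace Ω} {P : Measure Ω}

/- Truncating `ζ` at level `n` gives bounded test functions converging to `ζ` pointwise and
dominated by `|ζ|`, and conditional expectation is continuous under dominated convergence. -/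
theorem condExp_mul_comp_ae_eq_of_forall_bounded_s6 {β : Type*} [MeasurableSpace β]
    [IsFiniteMeasure P] (hm : m ≤ m₀) {V : Ω → β} {W₁ W₂ c : Ω → ℝ} {C : ℝ}
    (hW₁ : AEStronglyMeasurable W₁ P) (hW₂ : AEStronglyMeasurable W₂ P)
    (hc : StronglyMeasurable[m] c) (hW₁C : ∀ᵐ ω ∂P, ‖W₁ ω‖ ≤ C)
    (hW₂C : ∀ᵐ ω ∂P, ‖W₂ ω‖ ≤ C) (hcC : ∀ᵐ ω ∂P, ‖c ω‖ ≤ C)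
    (h : ∀ f : β → ℝ, Measurable f → (∃ C, ∀ b, |f b| ≤ C) →
      P[fun ω => W₁ ω * f (V ω) | m] =ᵐ[P] fun ω => c ω * P[fun ω => W₂ ω * f (V ω) | m] ω)
    {ζ : β → ℝ} (hζ : Measurable ζ) (hζV : Integrable (fun ω => ζ (V ω)) P) :
    P[fun ω => W₁ ω * ζ (V ω) | m] =ᵐ[P] fun ω => c ω * P[fun ω => W₂ ω * ζ (V ω) | m] ω := by
  have htrunc (n : ℕ) : Measurable ((Icc (-(n : ℝ)) n).indicator id) :=
    measurable_id.indicator measurableSet_Icc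
  set F : ℕ → Ω → ℝ := fun n ω => (Icc (-(n : ℝ)) n).indicator id (ζ (V ω))
  have hFZ (n : ℕ) : ∀ᵐ ω ∂P, ‖F n ω‖ ≤ ‖ζ (V ω)‖ :=
    ae_of_all _ fun ω => norm_indicator_le_norm_self _ _
  have hF (n : ℕ) : Integrable (F n) P :=
    hζV.mono ((htrunc n).comp_aemeasurable hζV.aemeasurable).aestronglyMeasurable (hFZ n)
  have hbound {W G B : Ω → ℝ} (hWC : ∀ᵐ ω ∂P, ‖W ω‖ ≤ C) (hGB : ∀ᵐ ω ∂P, ‖G ω‖ ≤ B ω) :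
      ∀ᵐ ω ∂P, ‖W ω * G ω‖ ≤ C * B ω := by
    filter_upwards [hWC, hGB] with ω h₁ h₂
    rw [norm_mul]
    exact mul_le_mul h₁ h₂ (norm_nonneg _) ((norm_nonneg _).trans h₁)
  have hpull {g : Ω → ℝ} (hg : Integrable g P) :
      (fun ω => c ω * P[g | m] ω) =ᵐ[P] P[fun ω => c ω * g ω | m] :=
    (condExp_stronglyMeasurable_mul_of_bound hm hc hg C hcC).symm
  refine (tendsto_condExp_unique (fun n ω => W₁ ω * F n ω) (fun n ω => c ω * (W₂ ω * F n ω))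
    _ _ (fun n => (hF n).bdd_mul hW₁ hW₁C)
    (fun n => ((hF n).bdd_mul hW₂ hW₂C).bdd_mul (hc.mono hm).aestronglyMeasurable hcC)
    (ae_of_all _ fun ω => (tendsto_indicator_Icc_id _).const_mul _)
    (ae_of_all _ fun ω => ((tendsto_indicator_Icc_id _).const_mul _).const_mul _)
    _ (hζV.norm.const_mul C) _ ((hζV.norm.const_mul C).const_mul C)
    (fun n => hbound hW₁C (hFZ n)) (fun n => hbound hcC (hbound hW₂C (hFZ n)))
    fun n => ?_).trans (hpull (hζV.bdd_mul hW₂ hW₂C)).symm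
  exact (h _ ((htrunc n).comp hζ) ⟨n, fun b => abs_indicator_Icc_id_le n (ζ b)⟩).trans
    (hpull ((hF n).bdd_mul hW₂ hW₂C))

def IsCondCentered (m : MeasurableSpace Ω) {m₀ : MeasurableSpace Ω} (P : Measure Ω)
    (Z : Ω → ℝ) : Prop :=
  Integrable Z P ∧ P[Z | m] =ᵐ[P] 0

namespace IsCondCentered

variable {Z Z' : Ω → ℝ}

theorem add (hZ : IsCondCentered m P Z) (hZ' : IsCondCentered m P Z') :
    IsCondCentered m P fun ω => Z ω + Z' ω :=
  ⟨hZ.1.add hZ'.1, (condExp_add hZ.1 hZ'.1 m).trans (by simpa using hZ.2.add hZ'.2)⟩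

theorem sub (hZ : IsCondCentered m P Z) (hZ' : IsCondCentered m P Z') :
    IsCondCentered m P fun ω => Z ω - Z' ω :=
  ⟨hZ.1.sub hZ'.1, (condExp_sub hZ.1 hZ'.1 m).trans (by simpa using hZ.2.sub hZ'.2)⟩

theorem mul_left [IsFiniteMeasure P] (hm : m ≤ m₀) (hZ : IsCondCentered m P Z) {g : Ω → ℝ}
    {C : ℝ} (hg : StronglyMeasurable[m] g) (hgC : ∀ᵐ ω ∂P, ‖g ω‖ ≤ C) :
    IsCondCentered m P fun ω => g ω * Z ω := by
  refine ⟨hZ.1.bdd_mul (hg.mono hm).aestronglyMeasurable hgC, ?_⟩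
  filter_upwards [condExp_stronglyMeasurable_mul_of_bound hm hg hZ.1 C hgC, hZ.2] with ω h₁ h₂
  exact h₁.trans (by simp [h₂])

theorem integral_eq_zero [IsFiniteMeasure P] (hm : m ≤ m₀) (hZ : IsCondCentered m P Z) :
    ∫ ω, Z ω ∂P = 0 := by
  rw [← integral_condExp hm, integral_congr_ae hZ.2, integral_zero']

end IsCondCentered

theorem isCondCentered_mul_sub [IsFiniteMeasure P] {W Z h : Ω → ℝ} {C : ℝ}
    (hW : AEStronglyMeasurable W P) (hWC : ∀ᵐ ω ∂P, ‖W ω‖ ≤ C) (hZ : Integrable Z P)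
    (hh : StronglyMeasurable[m] h) (hhi : Integrable h P)
    (H : P[fun ω => W ω * Z ω | m] =ᵐ[P] fun ω => h ω * P[W | m] ω) :
    IsCondCentered m P fun ω => W ω * (Z ω - h ω) := by
  have hWZ : Integrable (fun ω => W ω * Z ω) P := hZ.bdd_mul hW hWC
  have hhW : Integrable (fun ω => h ω * W ω) P := hhi.mul_bdd hW hWC
  have hsplit : (fun ω => W ω * (Z ω - h ω)) = fun ω => W ω * Z ω - h ω * W ω := by
    ext ω; ring
  rw [hsplit]
  refine ⟨hWZ.sub hhW, ?_⟩
  have hpull : P[fun ω => h ω * W ω | m] =ᵐ[P] fun ω => h ω * P[W | m] ω :=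
    condExp_mul_of_stronglyMeasurable_left hh hhW ((integrable_const C).mono' hW hWC)
  filter_upwards [condExp_sub hWZ hhW m, hpull, H] with ω h₁ h₂ h₃
  exact h₁.trans (by simp [h₂, h₃])

theorem isCondCentered_one_sub_mul_sub [IsFiniteMeasure P] (hm : m ≤ m₀) {G Z p μ : Ω → ℝ}
    {C : ℝ} (hG : AEStronglyMeasurable G P) (hGC : ∀ᵐ ω ∂P, ‖G ω‖ ≤ C) (hZ : Integrable Z P)
    (hμ : StronglyMeasurable[m] μ) (hμZ : μ =ᵐ[P] P[Z | m]) (hGp : P[G | m] =ᵐ[P] p)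
    (hGZ : P[fun ω => G ω * Z ω | m] =ᵐ[P] fun ω => p ω * P[Z | m] ω) :
    IsCondCentered m P fun ω => (1 - G ω) * (Z ω - μ ω) := by
  have hGi : Integrable G P := (integrable_const C).mono' hG hGC
  have hE1G : P[fun ω => 1 - G ω | m] =ᵐ[P] fun ω => 1 - p ω := by
    filter_upwards [condExp_sub (integrable_const 1) hGi m, hGp] with ω h₁ h₂
    rw [condExp_const hm] at h₁
    exact h₁.trans (by simp [h₂])
  have hE1GZ : P[fun ω => (1 - G ω) * Z ω | m] =ᵐ[P] fun ω => (1 - p ω) * P[Z | m] ω := by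
    have hsplit : (fun ω => (1 - G ω) * Z ω) = Z - fun ω => G ω * Z ω := by
      ext ω; simp only [Pi.sub_apply]; ring
    filter_upwards [hsplit ▸ condExp_sub hZ (hZ.bdd_mul hG hGC) m, hGZ] with ω h₁ h₂
    exact h₁.trans (by simp only [Pi.sub_apply, h₂]; ring)
  have h1GC : ∀ᵐ ω ∂P, ‖1 - G ω‖ ≤ 1 + C := by
    filter_upwards [hGC] with ω h
    exact (norm_sub_le _ _).trans (by simpa using h)
  refine isCondCentered_mul_sub (aestronglyMeasurable_const.sub hG) h1GC hZ hμ
    (integrable_condExp.congr hμZ.symm) ?_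
  filter_upwards [hE1GZ, hE1G, hμZ] with ω h₁ h₂ h₃
  rw [h₁, h₂, h₃, mul_comm]

theorem outcome_regressions_ae_eq_condExp {A G Y Y0 Y1 e p μ0 μ1 : Ω → ℝ}
    (hA : ∀ ω, IsIdempotentElem (A ω)) (hcons : ∀ ω, Y ω = A ω * Y1 ω + (1 - A ω) * Y0 ω)
    (hGY0 : Integrable (fun ω => G ω * Y0 ω) P)
    (hGAY0 : Integrable (fun ω => G ω * A ω * Y0 ω) P)
    (hpos : ∀ᵐ ω ∂P, 0 < e ω ∧ e ω < 1 ∧ 0 < p ω)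
    (hG₁ : P[fun ω => G ω * Y1 ω | m] =ᵐ[P] fun ω => p ω * P[Y1 | m] ω)
    (hG₀ : P[fun ω => G ω * Y0 ω | m] =ᵐ[P] fun ω => p ω * P[Y0 | m] ω)
    (hGA₁ : P[fun ω => G ω * A ω * Y1 ω | m] =ᵐ[P]
      fun ω => e ω * P[fun ω => G ω * Y1 ω | m] ω)
    (hGA₀ : P[fun ω => G ω * A ω * Y0 ω | m] =ᵐ[P]
      fun ω => e ω * P[fun ω => G ω * Y0 ω | m] ω)
    (hμ1 : (fun ω => μ1 ω * e ω * p ω) =ᵐ[P] P[fun ω => A ω * G ω * Y ω | m])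
    (hμ0 : (fun ω => μ0 ω * (1 - e ω) * p ω) =ᵐ[P] P[fun ω => (1 - A ω) * G ω * Y ω | m]) :
    μ1 =ᵐ[P] P[Y1 | m] ∧ μ0 =ᵐ[P] P[Y0 | m] := by
  have htreated : (fun ω => A ω * G ω * Y ω) = fun ω => G ω * A ω * Y1 ω := by
    ext ω
    rw [hcons]
    linear_combination G ω * (Y1 ω - Y0 ω) * (hA ω).eq
  have hcontrol : (fun ω => (1 - A ω) * G ω * Y ω) =
      (fun ω => G ω * Y0 ω) - fun ω => G ω * A ω * Y0 ω := by
    ext ω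
    rw [hcons, Pi.sub_apply]
    linear_combination -G ω * (Y1 ω - Y0 ω) * (hA ω).eq
  rw [htreated] at hμ1
  rw [hcontrol] at hμ0
  constructor
  · filter_upwards [hμ1, hGA₁, hG₁, hpos] with ω h₁ h₂ h₃ h₄
    refine mul_right_cancel₀ (mul_pos h₄.1 h₄.2.2).ne' ?_
    linear_combination h₁ + h₂ + e ω * h₃
  · filter_upwards [hμ0, condExp_sub hGY0 hGAY0 m, hGA₀, hG₀, hpos] with ω h₁ h₂ h₃ h₄ h₅
    rw [Pi.sub_apply] at h₂
    refine mul_right_cancel₀ (mul_pos (sub_pos.mpr h₅.2.1) h₅.2.2).ne' ?_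
    linear_combination h₁ + h₂ - h₃ + (1 - e ω) * h₄

theorem isCondCentered_outcome_residuals [IsFiniteMeasure P] {A G Y e p μ0 μ1 : Ω → ℝ}
    (hA : ∀ ω, IsIdempotentElem (A ω)) (hG : ∀ ω, IsIdempotentElem (G ω))
    (hAm : AEStronglyMeasurable A P) (hGm : AEStronglyMeasurable G P) (hY : Integrable Y P)
    (hμ1 : StronglyMeasurable[m] μ1) (hμ0 : StronglyMeasurable[m] μ0)
    (hμ1i : Integrable μ1 P) (hμ0i : Integrable μ0 P)
    (hp : p =ᵐ[P] P[G | m]) (he : (fun ω => e ω * p ω) =ᵐ[P] P[fun ω => A ω * G ω | m])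
    (hμ1E : (fun ω => μ1 ω * e ω * p ω) =ᵐ[P] P[fun ω => A ω * G ω * Y ω | m])
    (hμ0E : (fun ω => μ0 ω * (1 - e ω) * p ω) =ᵐ[P]
      P[fun ω => (1 - A ω) * G ω * Y ω | m]) :
    IsCondCentered m P (fun ω => A ω * G ω * (Y ω - μ1 ω)) ∧
      IsCondCentered m P (fun ω => (1 - A ω) * G ω * (Y ω - μ0 ω)) := by
  have hunit {W : Ω → ℝ} (hW : ∀ ω, IsIdempotentElem (W ω)) : ∀ᵐ ω ∂P, ‖W ω‖ ≤ 1 :=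
    ae_of_all _ fun ω => norm_le_one_of_isIdempotentElem (hW ω)
  have hGi : Integrable G P := (integrable_const 1).mono' hGm (hunit hG)
  have hAGi : Integrable (fun ω => A ω * G ω) P := (integrable_const 1).mono' (hAm.mul hGm)
    (hunit fun ω => (hA ω).mul (hG ω))
  have hEcontrol : P[fun ω => (1 - A ω) * G ω | m] =ᵐ[P] fun ω => (1 - e ω) * p ω := by
    have hsplit : (fun ω => (1 - A ω) * G ω) = G - fun ω => A ω * G ω := by
      ext ω; simp only [Pi.sub_apply]; ring
    filter_upwards [hsplit ▸ condExp_sub hGi hAGi m, hp, he] with ω h₁ h₂ h₃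
    rw [h₁, Pi.sub_apply, ← h₂, ← h₃]
    ring
  constructor
  · refine isCondCentered_mul_sub (hAm.mul hGm) (hunit fun ω => (hA ω).mul (hG ω)) hY hμ1
      hμ1i ?_
    filter_upwards [hμ1E, he] with ω h₁ h₂
    rw [← h₁, ← h₂]
    ring
  · refine isCondCentered_mul_sub ((aestronglyMeasurable_const.sub hAm).mul hGm)
      (hunit fun ω => (hA ω).one_sub.mul (hG ω)) hY hμ0 hμ0i ?_
    filter_upwards [hμ0E, hEcontrol] with ω h₁ h₂
    rw [← h₁, h₂]
    ring
end

theorem double_robustness_propensity_side_general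
    {Ω : Type*} [MeasurableSpace Ω] (P : Measure Ω) [IsProbabilityMeasure P]
    (X A G Y0 Y1 Y : Ω → ℝ)
    (hX : Measurable X) (hA : Measurable A) (hG : Measurable G)
    (hY0 : Integrable Y0 P) (hY1 : Integrable Y1 P)
    (hAbin : ∀ ω, A ω = 0 ∨ A ω = 1) (hGbin : ∀ ω, G ω = 0 ∨ G ω = 1)
    (hcons : ∀ ω, Y ω = A ω * Y1 ω + (1 - A ω) * Y0 ω)
    (e1 π μ0 μ1 : ℝ → ℝ)
    (he1m : Measurable e1) (hπm : Measurable π)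
    (hμ0m : Measurable μ0) (hμ1m : Measurable μ1)
    (hπ : (fun ω => π (X ω)) =ᵐ[P] P[G | mX X])
    (he1 : (fun ω => e1 (X ω) * π (X ω)) =ᵐ[P] P[fun ω => A ω * G ω | mX X])
    (hpose : ∀ᵐ ω ∂P, 0 < e1 (X ω) ∧ e1 (X ω) < 1)
    (hposπ : ∀ᵐ ω ∂P, 0 < π (X ω) ∧ π (X ω) < 1)
    (hunconf : ∀ f : ℝ × ℝ → ℝ, Measurable f → (∃ C, ∀ p, |f p| ≤ C) →
      P[fun ω => G ω * A ω * f (Y0 ω, Y1 ω) | mX X]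
        =ᵐ[P] fun ω => e1 (X ω) * (P[fun ω => G ω * f (Y0 ω, Y1 ω) | mX X]) ω)
    (htrans : ∀ f : ℝ × ℝ → ℝ, Measurable f → (∃ C, ∀ p, |f p| ≤ C) →
      P[fun ω => G ω * f (Y0 ω, Y1 ω) | mX X]
        =ᵐ[P] fun ω => π (X ω) * (P[fun ω => f (Y0 ω, Y1 ω) | mX X]) ω)
    (hμ1 : (fun ω => μ1 (X ω) * e1 (X ω) * π (X ω)) =ᵐ[P]
      P[fun ω => A ω * G ω * Y ω | mX X])
    (hμ0 : (fun ω => μ0 (X ω) * (1 - e1 (X ω)) * π (X ω)) =ᵐ[P]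
      P[fun ω => (1 - A ω) * G ω * Y ω | mX X])
    (q τ : ℝ)
    (hτ : τ = (∫ ω, (1 - G ω) * (Y1 ω - Y0 ω) ∂P) / (1 - q))
    (et πt : ℝ → ℝ) (hetm : Measurable et) (hπtm : Measurable πt)
    (ε : ℝ) (hε : 0 < ε)
    (hband : ∀ᵐ ω ∂P, ε ≤ et (X ω) ∧ et (X ω) ≤ 1 - ε
      ∧ ε ≤ πt (X ω) ∧ πt (X ω) ≤ 1 - ε)
    (φ : Ω → ℝ)
    (hφ : ∀ ω, φ ω =
      G ω / (1 - q) * ((1 - πt (X ω)) / πt (X ω)) *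
        (A ω * (Y ω - μ1 (X ω)) / et (X ω)
          - (1 - A ω) * (Y ω - μ0 (X ω)) / (1 - et (X ω)))
      + (1 - G ω) / (1 - q) * (μ1 (X ω) - μ0 (X ω))) :
    ∫ ω, φ ω ∂P = τ := by
  have hm : mX X ≤ ‹MeasurableSpace Ω› := hX.comap_le
  have hXm {h : ℝ → ℝ} (hh : Measurable h) : StronglyMeasurable[mX X] fun ω => h (X ω) :=
    (hh.comp (Measurable.of_comap_le le_rfl)).stronglyMeasurable
  have hAi (ω : Ω) : IsIdempotentElem (A ω) := IsIdempotentElem.iff_eq_zero_or_one.mpr (hAbin ω)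
  have hGi (ω : Ω) : IsIdempotentElem (G ω) := IsIdempotentElem.iff_eq_zero_or_one.mpr (hGbin ω)
  have hunit {W : Ω → ℝ} (hW : ∀ ω, IsIdempotentElem (W ω)) : ∀ᵐ ω ∂P, ‖W ω‖ ≤ 1 :=
    ae_of_all _ fun ω => norm_le_one_of_isIdempotentElem (hW ω)
  have hunitX {a : ℝ → ℝ} (ha : ∀ᵐ ω ∂P, 0 < a (X ω) ∧ a (X ω) < 1) :
      ∀ᵐ ω ∂P, ‖a (X ω)‖ ≤ 1 :=
    ha.mono fun ω h => by rw [Real.norm_eq_abs, abs_le]; constructor <;> linarith [h.1]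
  have hY : Integrable Y P := by
    rw [funext hcons]
    exact (hY1.bdd_mul hA.aestronglyMeasurable (hunit hAi)).add
      (hY0.bdd_mul (measurable_const.sub hA).aestronglyMeasurable (hunit fun ω => (hAi ω).one_sub))
  have hGζ {ζ : ℝ × ℝ → ℝ} (hζ : Measurable ζ)
      (hζY : Integrable (fun ω => ζ (Y0 ω, Y1 ω)) P) :
      P[fun ω => G ω * ζ (Y0 ω, Y1 ω) | mX X] =ᵐ[P]
        fun ω => π (X ω) * P[fun ω => ζ (Y0 ω, Y1 ω) | mX X] ω := by
    simpa only [one_mul] using condExp_mul_comp_ae_eq_of_forall_bounded_s6 hm (W₂ := fun _ => 1)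
      hG.aestronglyMeasurable aestronglyMeasurable_const (hXm hπm) (hunit hGi) (by simp)
      (hunitX hposπ) (fun f hf hfC => by simpa only [one_mul] using htrans f hf hfC) hζ hζY
  have hGAζ {ζ : ℝ × ℝ → ℝ} (hζ : Measurable ζ)
      (hζY : Integrable (fun ω => ζ (Y0 ω, Y1 ω)) P) :
      P[fun ω => G ω * A ω * ζ (Y0 ω, Y1 ω) | mX X] =ᵐ[P]
        fun ω => e1 (X ω) * P[fun ω => G ω * ζ (Y0 ω, Y1 ω) | mX X] ω :=
    condExp_mul_comp_ae_eq_of_forall_bounded_s6 hm (hG.mul hA).aestronglyMeasurable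
      hG.aestronglyMeasurable (hXm he1m) (hunit fun ω => (hGi ω).mul (hAi ω)) (hunit hGi)
      (hunitX hpose) hunconf hζ hζY
  obtain ⟨hμ1Y, hμ0Y⟩ := outcome_regressions_ae_eq_condExp (m := mX X) hAi hcons
    (hY0.bdd_mul hG.aestronglyMeasurable (hunit hGi))
    (hY0.bdd_mul (hG.mul hA).aestronglyMeasurable (hunit fun ω => (hGi ω).mul (hAi ω)))
    (by filter_upwards [hpose, hposπ] with ω h h' using ⟨h.1, h.2, h'.1⟩)
    (hGζ measurable_snd hY1) (hGζ measurable_fst hY0) (hGAζ measurable_snd hY1)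
    (hGAζ measurable_fst hY0) hμ1 hμ0
  obtain ⟨hZ1, hZ0⟩ := isCondCentered_outcome_residuals hAi hGi hA.aestronglyMeasurable
    hG.aestronglyMeasurable hY (hXm hμ1m) (hXm hμ0m) (integrable_condExp.congr hμ1Y.symm)
    (integrable_condExp.congr hμ0Y.symm) hπ he1 hμ1 hμ0
  have hR1 := isCondCentered_one_sub_mul_sub hm hG.aestronglyMeasurable (hunit hGi) hY1
    (hXm hμ1m) hμ1Y hπ.symm (hGζ measurable_snd hY1)
  have hR0 := isCondCentered_one_sub_mul_sub hm hG.aestronglyMeasurable (hunit hGi) hY0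
    (hXm hμ0m) hμ0Y hπ.symm (hGζ measurable_fst hY0)
  have hw₁ : Measurable fun x => (1 - πt x) / πt x / et x := by fun_prop
  have hw₀ : Measurable fun x => (1 - πt x) / πt x / (1 - et x) := by fun_prop
  have hw₁C : ∀ᵐ ω ∂P, ‖(1 - πt (X ω)) / πt (X ω) / et (X ω)‖ ≤ (ε * ε)⁻¹ := by
    filter_upwards [hband] with ω h
    exact norm_one_sub_div_div_le hε h.2.2.1 (by linarith) h.1
  have hw₀C : ∀ᵐ ω ∂P, ‖(1 - πt (X ω)) / πt (X ω) / (1 - et (X ω))‖ ≤ (ε * ε)⁻¹ := by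
    filter_upwards [hband] with ω h
    exact norm_one_sub_div_div_le hε h.2.2.1 (by linarith) (by linarith)
  have hS := (((hZ1.mul_left hm (hXm hw₁) hw₁C).sub (hZ0.mul_left hm (hXm hw₀) hw₀C)).sub
    hR1).add hR0
  have hD : Integrable (fun ω => (1 - G ω) * (Y1 ω - Y0 ω)) P :=
    (hY1.sub hY0).bdd_mul (measurable_const.sub hG).aestronglyMeasurable
      (hunit fun ω => (hGi ω).one_sub)
  calc ∫ ω, φ ω ∂P = (1 - q)⁻¹ * (∫ ω, ((1 - πt (X ω)) / πt (X ω) / et (X ω) *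
          (A ω * G ω * (Y ω - μ1 (X ω))) - (1 - πt (X ω)) / πt (X ω) / (1 - et (X ω)) *
          ((1 - A ω) * G ω * (Y ω - μ0 (X ω))) - (1 - G ω) * (Y1 ω - μ1 (X ω)) +
          (1 - G ω) * (Y0 ω - μ0 (X ω))) ∂P + ∫ ω, (1 - G ω) * (Y1 ω - Y0 ω) ∂P) := by
        rw [← integral_add hS.1 hD, ← integral_const_mul]
        exact integral_congr_ae (ae_of_all _ fun ω => by rw [hφ]; ring)
    _ = τ := by rw [hS.integral_eq_zero hm, hτ]; ring

theorem double_robustness_propensity_side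
    {Ω : Type*} [MeasurableSpace Ω] (P : Measure Ω) [IsProbabilityMeasure P]
    (X A G Y0 Y1 Y : Ω → ℝ)
    (hX : Measurable X) (hA : Measurable A) (hG : Measurable G)
    (hY0m : Measurable Y0) (hY1m : Measurable Y1)
    (hY0 : Integrable Y0 P) (hY1 : Integrable Y1 P)
    (hAbin : ∀ ω, A ω = 0 ∨ A ω = 1) (hGbin : ∀ ω, G ω = 0 ∨ G ω = 1)
    (hcons : ∀ ω, Y ω = A ω * Y1 ω + (1 - A ω) * Y0 ω)
    (e1 π μ0 μ1 : ℝ → ℝ)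
    (he1m : Measurable e1) (hπm : Measurable π)
    (hμ0m : Measurable μ0) (hμ1m : Measurable μ1)
    (hπ : (fun ω => π (X ω)) =ᵐ[P] P[G | mX X])
    (he1 : (fun ω => e1 (X ω) * π (X ω)) =ᵐ[P] P[fun ω => A ω * G ω | mX X])
    (hpose : ∀ᵐ ω ∂P, 0 < e1 (X ω) ∧ e1 (X ω) < 1)
    (hposπ : ∀ᵐ ω ∂P, 0 < π (X ω) ∧ π (X ω) < 1)
    (hunconf : ∀ f : ℝ × ℝ → ℝ, Measurable f → (∃ C, ∀ p, |f p| ≤ C) →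
      P[fun ω => G ω * A ω * f (Y0 ω, Y1 ω) | mX X]
        =ᵐ[P] fun ω => e1 (X ω) * (P[fun ω => G ω * f (Y0 ω, Y1 ω) | mX X]) ω)
    (htrans : ∀ f : ℝ × ℝ → ℝ, Measurable f → (∃ C, ∀ p, |f p| ≤ C) →
      P[fun ω => G ω * f (Y0 ω, Y1 ω) | mX X]
        =ᵐ[P] fun ω => π (X ω) * (P[fun ω => f (Y0 ω, Y1 ω) | mX X]) ω)
    (hμ1 : (fun ω => μ1 (X ω) * e1 (X ω) * π (X ω)) =ᵐ[P]
      P[fun ω => A ω * G ω * Y ω | mX X])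
    (hμ0 : (fun ω => μ0 (X ω) * (1 - e1 (X ω)) * π (X ω)) =ᵐ[P]
      P[fun ω => (1 - A ω) * G ω * Y ω | mX X])
    (q τ : ℝ)
    (hq : q = (P {ω | G ω = 1}).toReal) (hq0 : 0 < q) (hq1 : q < 1)
    (hτ : τ = (∫ ω, (1 - G ω) * (Y1 ω - Y0 ω) ∂P) / (1 - q))
    (et πt : ℝ → ℝ) (hetm : Measurable et) (hπtm : Measurable πt)
    (ε : ℝ) (hε : 0 < ε)
    (hband : ∀ᵐ ω ∂P, ε ≤ et (X ω) ∧ et (X ω) ≤ 1 - ε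
      ∧ ε ≤ πt (X ω) ∧ πt (X ω) ≤ 1 - ε)
    (φ : Ω → ℝ)
    (hφ : ∀ ω, φ ω =
      G ω / (1 - q) * ((1 - πt (X ω)) / πt (X ω)) *
        (A ω * (Y ω - μ1 (X ω)) / et (X ω)
          - (1 - A ω) * (Y ω - μ0 (X ω)) / (1 - et (X ω)))
      + (1 - G ω) / (1 - q) * (μ1 (X ω) - μ0 (X ω)))
    (hφint : Integrable φ P) :
    ∫ ω, φ ω ∂P = τ :=
  double_robustness_propensity_side_general P X A G Y0 Y1 Y hX hA hG hY0 hY1 hAbin hGbin hcons e1 π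
    μ0 μ1 he1m hπm hμ0m hμ1m hπ he1 hpose hposπ hunconf htrans hμ1 hμ0 q τ hτ et πt hetm hπtm ε hε
    hband φ hφ
end

section
/- Knowing the sampling score strictly improves efficiency: in setting I, the efficiency bound with known π(X) differs from the bound with unknown π(X) by E[ (μ1(X)−μ0(X)−τ)² π(X)(1−π(X)) ] / (1−q)², which is nonnegative, and is zero iff μ1(X)−μ0(X) = τ almost surely. -/
open MeasureTheory ProbabilityTheory

/-!
`φI` and `φK` differ only in the weight of the regression term, `1 - G` versus its conditional
mean `1 - π(X)`. Since the inverse-probability-weighted term carries the factor `G` and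
`G (1 - G) = 0`, the difference `φI² - φK²` is a combination of `1 - G`, `1`, `AGY`, `AG`,
`(1 - A)GY`, `(1 - A)G` with coefficients that are functions of `X`. Replacing each of these by
its conditional expectation given `X` cancels the cross terms and leaves
`(μ1 - μ0 - τ)² π (1 - π) / (1 - q)²`. The coefficients need not be integrable, so the pull-out
property is applied on the `X`-measurable sets where they are bounded, which exhaust the space.
-/

section PullOut

variable {Ω ι : Type*} {m mΩ : MeasurableSpace Ω} {P : Measure Ω} {s : Finset ι} {b g : ι → Ω → ℝ}

theorem condExp_sum_mul_of_bounded (hm : m ≤ mΩ)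
    (hb : ∀ i ∈ s, StronglyMeasurable[m] (b i)) (hbC : ∀ i ∈ s, ∃ C, ∀ ω, |b i ω| ≤ C)
    (hg : ∀ i ∈ s, Integrable (g i) P) :
    P[∑ i ∈ s, b i * g i | m] =ᵐ[P] ∑ i ∈ s, b i * P[g i | m] := by
  have hbg : ∀ i ∈ s, Integrable (b i * g i) P := fun i hi => by
    obtain ⟨C, hC⟩ := hbC i hi
    exact (hg i hi).bdd_mul ((hb i hi).mono hm).aestronglyMeasurable (ae_of_all _ hC)
  exact (condExp_finsetSum hbg m).trans <| eventuallyEq_sum fun i hi =>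
    condExp_mul_of_stronglyMeasurable_left (hb i hi) (hbg i hi) (hg i hi)

theorem condExp_sum_mul_of_stronglyMeasurable (hm : m ≤ mΩ)
    (hb : ∀ i ∈ s, StronglyMeasurable[m] (b i)) (hg : ∀ i ∈ s, Integrable (g i) P)
    (hbg : Integrable (∑ i ∈ s, b i * g i) P) :
    P[∑ i ∈ s, b i * g i | m] =ᵐ[P] ∑ i ∈ s, b i * P[g i | m] := by
  set T : ℕ → Set Ω := fun n => {ω | ∑ i ∈ s, |b i ω| ≤ n}
  have hB : Measurable[m] fun ω => ∑ i ∈ s, |b i ω| :=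
    Finset.measurable_fun_sum (m := m) s fun i hi => measurable_abs.comp (hb i hi).measurable
  have hT (n : ℕ) : MeasurableSet[m] (T n) := measurableSet_le hB measurable_const
  have hbT (n : ℕ) (i : ι) (hi : i ∈ s) (ω : Ω) : |(T n).indicator (b i) ω| ≤ n := by
    by_cases hω : ω ∈ T n
    · rw [Set.indicator_of_mem hω]
      exact (Finset.single_le_sum (fun j _ => abs_nonneg (b j ω)) hi).trans hω
    · simp [Set.indicator_of_notMem hω]
  have hlocal (n : ℕ) : ∀ᵐ ω ∂P, ω ∈ T n →
      P[∑ i ∈ s, b i * g i | m] ω = (∑ i ∈ s, b i * P[g i | m]) ω := by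
    have hind : (T n).indicator (∑ i ∈ s, b i * g i)
        = ∑ i ∈ s, (T n).indicator (b i) * g i := by
      ext ω
      by_cases hω : ω ∈ T n <;> simp [hω, Finset.sum_apply]
    have htrunc := condExp_sum_mul_of_bounded hm (fun i hi => (hb i hi).indicator (hT n))
      (fun i hi => ⟨n, hbT n i hi⟩) hg
    rw [← hind] at htrunc
    filter_upwards [condExp_indicator hbg (hT n), htrunc] with ω h₁ h₂ hω
    simpa [Set.indicator_of_mem hω, Finset.sum_apply, h₁] using h₂
  filter_upwards [ae_all_iff.2 hlocal] with ω hω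
  obtain ⟨n, hn⟩ := exists_nat_ge (∑ i ∈ s, |b i ω|)
  exact hω n hn

end PullOut

theorem mul_eq_zero_or_one {M : Type*} [MulZeroOneClass M] {a b : M} (ha : a = 0 ∨ a = 1)
    (hb : b = 0 ∨ b = 1) : a * b = 0 ∨ a * b = 1 := by
  rcases ha with rfl | rfl <;> simp [hb]

theorem one_sub_eq_zero_or_one {R : Type*} [Ring R] {a : R} (ha : a = 0 ∨ a = 1) :
    1 - a = 0 ∨ 1 - a = 1 := by
  rcases ha with rfl | rfl <;> simp

def eifParts (a g y : ℝ) : Fin 6 → ℝ :=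
  ![1 - g, 1, a * g * y, a * g, (1 - a) * g * y, (1 - a) * g]

def eifPartsCondExp (e p m0 m1 : ℝ) : Fin 6 → ℝ :=
  ![1 - p, 1, m1 * e * p, e * p, m0 * (1 - e) * p, p - e * p]

-- `r` stands for `1 - q`: as an atom it lets `ring` match `r⁻¹ ^ 2` with `(r ^ 2)⁻¹`.
noncomputable def eifWeights (e p m0 m1 r τ : ℝ) : Fin 6 → ℝ :=
  let D := m1 - m0 - τ
  let c := 2 * (1 - p) ^ 2 * D / (r ^ 2 * p)
  ![D ^ 2 / r ^ 2, -((1 - p) ^ 2 * D ^ 2 / r ^ 2),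
    -(c / e), c * m1 / e, c / (1 - e), -(c * m0 / (1 - e))]

theorem eif_sq_sub_sq_eq_sum {a g y e p m0 m1 r τ : ℝ} (ha : a = 0 ∨ a = 1) (hg : g = 0 ∨ g = 1) :
    (g / r * ((1 - p) / p) * (a * (y - m1) / e - (1 - a) * (y - m0) / (1 - e))
        + (1 - g) / r * (m1 - m0 - τ)) ^ 2
      - (g / r * ((1 - p) / p) * (a * (y - m1) / e - (1 - a) * (y - m0) / (1 - e))
        + (1 - p) / r * (m1 - m0 - τ)) ^ 2
      = ∑ i, eifWeights e p m0 m1 r τ i * eifParts a g y i := by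
  simp only [Fin.sum_univ_six, eifWeights, eifParts, Matrix.cons_val]
  rcases ha with rfl | rfl <;> rcases hg with rfl | rfl <;> ring

theorem sum_eifWeights_mul_eifPartsCondExp (e p m0 m1 r τ : ℝ) :
    ∑ i, eifWeights e p m0 m1 r τ i * eifPartsCondExp e p m0 m1 i
      = (m1 - m0 - τ) ^ 2 * p * (1 - p) / r ^ 2 := by
  simp only [Fin.sum_univ_six, eifWeights, eifPartsCondExp, Matrix.cons_val]
  ring

theorem measurable_eifWeights {e1 π μ0 μ1 : ℝ → ℝ} (he1m : Measurable e1) (hπm : Measurable π)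
    (hμ0m : Measurable μ0) (hμ1m : Measurable μ1) (r τ : ℝ) (i : Fin 6) :
    Measurable fun x => eifWeights (e1 x) (π x) (μ0 x) (μ1 x) r τ i := by
  fin_cases i <;> simp only [eifWeights] <;> fun_prop

section Sampling

variable {Ω : Type*} [MeasurableSpace Ω] {P : Measure Ω}

theorem mX_le {X : Ω → ℝ} (hX : Measurable X) : mX X ≤ ‹MeasurableSpace Ω› :=
  hX.comap_le

theorem integrable_mul_of_binary {B Z : Ω → ℝ} (hB : Measurable B)
    (hB01 : ∀ ω, B ω = 0 ∨ B ω = 1) (hZ : Integrable Z P) : Integrable (fun ω => B ω * Z ω) P :=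
  hZ.bdd_mul hB.aestronglyMeasurable (c := 1) <| ae_of_all _ fun ω => by
    rcases hB01 ω with h | h <;> simp [h]

theorem integrable_of_binary [IsFiniteMeasure P] {B : Ω → ℝ} (hB : Measurable B)
    (hB01 : ∀ ω, B ω = 0 ∨ B ω = 1) : Integrable B P :=
  .of_bound hB.aestronglyMeasurable 1 <| ae_of_all _ fun ω => by
    rcases hB01 ω with h | h <;> simp [h]

theorem ae_nonneg_sq_mul_mul_one_sub {f p : Ω → ℝ} (hp : ∀ᵐ ω ∂P, 0 < p ω ∧ p ω < 1) :
    0 ≤ᵐ[P] fun ω => f ω ^ 2 * p ω * (1 - p ω) := by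
  filter_upwards [hp] with ω hω
  exact mul_nonneg (mul_nonneg (sq_nonneg _) hω.1.le) (sub_nonneg.2 hω.2.le)

theorem integral_sq_mul_mul_one_sub_eq_zero_iff {f p : Ω → ℝ}
    (hp : ∀ᵐ ω ∂P, 0 < p ω ∧ p ω < 1) (hi : Integrable (fun ω => f ω ^ 2 * p ω * (1 - p ω)) P) :
    ∫ ω, f ω ^ 2 * p ω * (1 - p ω) ∂P = 0 ↔ ∀ᵐ ω ∂P, f ω = 0 := by
  rw [integral_eq_zero_iff_of_nonneg_ae (ae_nonneg_sq_mul_mul_one_sub hp) hi]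
  refine ⟨fun h => ?_, fun h => ?_⟩
  · filter_upwards [h, hp] with ω hω hpω
    have : p ω * (1 - p ω) ≠ 0 := (mul_pos hpω.1 (sub_pos.2 hpω.2)).ne'
    simpa [mul_assoc, this] using hω
  · filter_upwards [h] with ω hω
    simp [hω]

variable [IsFiniteMeasure P] {X A G Y0 Y1 Y : Ω → ℝ} {e1 π μ0 μ1 : ℝ → ℝ}

theorem integrable_eifParts (hA : Measurable A) (hG : Measurable G)
    (hY0 : Integrable Y0 P) (hY1 : Integrable Y1 P)
    (hAbin : ∀ ω, A ω = 0 ∨ A ω = 1) (hGbin : ∀ ω, G ω = 0 ∨ G ω = 1)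
    (hcons : ∀ ω, Y ω = A ω * Y1 ω + (1 - A ω) * Y0 ω) (i : Fin 6) :
    Integrable (fun ω => eifParts (A ω) (G ω) (Y ω) i) P := by
  have hAG ω := mul_eq_zero_or_one (hAbin ω) (hGbin ω)
  have hAG' ω := mul_eq_zero_or_one (one_sub_eq_zero_or_one (hAbin ω)) (hGbin ω)
  have hAGY : ∀ ω, A ω * G ω * Y ω = A ω * G ω * Y1 ω := fun ω => by
    rcases hAbin ω with h | h <;> simp [hcons ω, h]
  have hAGY' : ∀ ω, (1 - A ω) * G ω * Y ω = (1 - A ω) * G ω * Y0 ω := fun ω => by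
    rcases hAbin ω with h | h <;> simp [hcons ω, h]
  fin_cases i <;> simp only [eifParts, Fin.reduceFinMk, Matrix.cons_val]
  · exact integrable_of_binary (by fun_prop) fun ω => one_sub_eq_zero_or_one (hGbin ω)
  · exact integrable_const 1
  · simpa only [hAGY] using integrable_mul_of_binary (by fun_prop) hAG hY1
  · exact integrable_of_binary (by fun_prop) hAG
  · simpa only [hAGY'] using integrable_mul_of_binary (by fun_prop) hAG' hY0
  · exact integrable_of_binary (by fun_prop) hAG'

theorem condExp_eifParts (hX : Measurable X) (hA : Measurable A) (hG : Measurable G)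
    (hAbin : ∀ ω, A ω = 0 ∨ A ω = 1) (hGbin : ∀ ω, G ω = 0 ∨ G ω = 1)
    (hπ : (fun ω => π (X ω)) =ᵐ[P] P[G | mX X])
    (he1 : (fun ω => e1 (X ω) * π (X ω)) =ᵐ[P] P[fun ω => A ω * G ω | mX X])
    (hμ1 : (fun ω => μ1 (X ω) * e1 (X ω) * π (X ω)) =ᵐ[P]
      P[fun ω => A ω * G ω * Y ω | mX X])
    (hμ0 : (fun ω => μ0 (X ω) * (1 - e1 (X ω)) * π (X ω)) =ᵐ[P]
      P[fun ω => (1 - A ω) * G ω * Y ω | mX X]) (i : Fin 6) :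
    P[fun ω => eifParts (A ω) (G ω) (Y ω) i | mX X]
      =ᵐ[P] fun ω => eifPartsCondExp (e1 (X ω)) (π (X ω)) (μ0 (X ω)) (μ1 (X ω)) i := by
  have hGi : Integrable G P := integrable_of_binary hG hGbin
  have hAGi : Integrable (fun ω => A ω * G ω) P :=
    integrable_of_binary (by fun_prop) fun ω => mul_eq_zero_or_one (hAbin ω) (hGbin ω)
  fin_cases i <;> simp only [eifParts, eifPartsCondExp, Fin.reduceFinMk, Matrix.cons_val]
  · filter_upwards [condExp_sub (integrable_const 1) hGi (mX X), hπ] with ω h hω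
    exact h.trans (by simp [condExp_const (mX_le hX), hω])
  · rw [condExp_const (mX_le hX)]
  · exact hμ1.symm
  · exact he1.symm
  · exact hμ0.symm
  · have hsplit : (fun ω => (1 - A ω) * G ω) = G - fun ω => A ω * G ω := by
      ext; simp only [Pi.sub_apply]; ring
    filter_upwards [condExp_sub hGi hAGi (mX X), hπ, he1] with ω h hω hω'
    simp [hsplit, h, ← hω, ← hω']

theorem condExp_eif_sq_sub_sq (hX : Measurable X) (hA : Measurable A) (hG : Measurable G)
    (hY0 : Integrable Y0 P) (hY1 : Integrable Y1 P)
    (hAbin : ∀ ω, A ω = 0 ∨ A ω = 1) (hGbin : ∀ ω, G ω = 0 ∨ G ω = 1)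
    (hcons : ∀ ω, Y ω = A ω * Y1 ω + (1 - A ω) * Y0 ω)
    (he1m : Measurable e1) (hπm : Measurable π) (hμ0m : Measurable μ0) (hμ1m : Measurable μ1)
    (hπ : (fun ω => π (X ω)) =ᵐ[P] P[G | mX X])
    (he1 : (fun ω => e1 (X ω) * π (X ω)) =ᵐ[P] P[fun ω => A ω * G ω | mX X])
    (hμ1 : (fun ω => μ1 (X ω) * e1 (X ω) * π (X ω)) =ᵐ[P]
      P[fun ω => A ω * G ω * Y ω | mX X])
    (hμ0 : (fun ω => μ0 (X ω) * (1 - e1 (X ω)) * π (X ω)) =ᵐ[P]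
      P[fun ω => (1 - A ω) * G ω * Y ω | mX X])
    {q τ : ℝ} {φI φK : Ω → ℝ}
    (hφI : ∀ ω, φI ω =
      G ω / (1 - q) * ((1 - π (X ω)) / π (X ω)) *
        (A ω * (Y ω - μ1 (X ω)) / e1 (X ω)
          - (1 - A ω) * (Y ω - μ0 (X ω)) / (1 - e1 (X ω)))
      + (1 - G ω) / (1 - q) * (μ1 (X ω) - μ0 (X ω) - τ))
    (hφK : ∀ ω, φK ω =
      G ω / (1 - q) * ((1 - π (X ω)) / π (X ω)) *
        (A ω * (Y ω - μ1 (X ω)) / e1 (X ω)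
          - (1 - A ω) * (Y ω - μ0 (X ω)) / (1 - e1 (X ω)))
      + (1 - π (X ω)) / (1 - q) * (μ1 (X ω) - μ0 (X ω) - τ))
    (hint : Integrable (fun ω => φI ω ^ 2 - φK ω ^ 2) P) :
    P[fun ω => φI ω ^ 2 - φK ω ^ 2 | mX X] =ᵐ[P]
      fun ω => (μ1 (X ω) - μ0 (X ω) - τ) ^ 2 * π (X ω) * (1 - π (X ω)) / (1 - q) ^ 2 := by
  set w : Fin 6 → Ω → ℝ := fun i ω =>
    eifWeights (e1 (X ω)) (π (X ω)) (μ0 (X ω)) (μ1 (X ω)) (1 - q) τ i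
  have hsum : (fun ω => φI ω ^ 2 - φK ω ^ 2)
      = ∑ i, w i * fun ω => eifParts (A ω) (G ω) (Y ω) i := by
    ext ω
    simp only [Finset.sum_apply, Pi.mul_apply, w, hφI, hφK]
    exact eif_sq_sub_sq_eq_sum (hAbin ω) (hGbin ω)
  have hw (i : Fin 6) : StronglyMeasurable[mX X] (w i) :=
    ((measurable_eifWeights he1m hπm hμ0m hμ1m _ τ i).comp
      (comap_measurable X)).stronglyMeasurable
  rw [hsum] at hint ⊢
  filter_upwards [condExp_sum_mul_of_stronglyMeasurable (mX_le hX) (fun i _ => hw i)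
      (fun i _ => integrable_eifParts hA hG hY0 hY1 hAbin hGbin hcons i) hint,
    ae_all_iff.2 (condExp_eifParts hX hA hG hAbin hGbin hπ he1 hμ1 hμ0)] with ω h hk
  rw [h, Finset.sum_apply]
  simp only [Pi.mul_apply, hk]
  exact sum_eifWeights_mul_eifPartsCondExp ..

end Sampling

theorem known_sampling_score_efficiency_gain_general
    {Ω : Type*} [MeasurableSpace Ω] (P : Measure Ω) [IsProbabilityMeasure P]
    (X A G Y0 Y1 Y : Ω → ℝ)
    (hX : Measurable X) (hA : Measurable A) (hG : Measurable G)
    (hY0 : Integrable Y0 P) (hY1 : Integrable Y1 P)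
    (hAbin : ∀ ω, A ω = 0 ∨ A ω = 1) (hGbin : ∀ ω, G ω = 0 ∨ G ω = 1)
    (hcons : ∀ ω, Y ω = A ω * Y1 ω + (1 - A ω) * Y0 ω)
    (e1 π μ0 μ1 : ℝ → ℝ)
    (he1m : Measurable e1) (hπm : Measurable π)
    (hμ0m : Measurable μ0) (hμ1m : Measurable μ1)
    (hπ : (fun ω => π (X ω)) =ᵐ[P] P[G | mX X])
    (he1 : (fun ω => e1 (X ω) * π (X ω)) =ᵐ[P] P[fun ω => A ω * G ω | mX X])
    (hposπ : ∀ᵐ ω ∂P, 0 < π (X ω) ∧ π (X ω) < 1)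
    (hμ1 : (fun ω => μ1 (X ω) * e1 (X ω) * π (X ω)) =ᵐ[P]
      P[fun ω => A ω * G ω * Y ω | mX X])
    (hμ0 : (fun ω => μ0 (X ω) * (1 - e1 (X ω)) * π (X ω)) =ᵐ[P]
      P[fun ω => (1 - A ω) * G ω * Y ω | mX X])
    (q τ : ℝ)
    (hq1 : q < 1)
    (φI : Ω → ℝ)
    (hφI : ∀ ω, φI ω =
      G ω / (1 - q) * ((1 - π (X ω)) / π (X ω)) *
        (A ω * (Y ω - μ1 (X ω)) / e1 (X ω)
          - (1 - A ω) * (Y ω - μ0 (X ω)) / (1 - e1 (X ω)))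
      + (1 - G ω) / (1 - q) * (μ1 (X ω) - μ0 (X ω) - τ))
    (hφIsq : Integrable (fun ω => φI ω ^ 2) P)
    (φK : Ω → ℝ)
    (hφK : ∀ ω, φK ω =
      G ω / (1 - q) * ((1 - π (X ω)) / π (X ω)) *
        (A ω * (Y ω - μ1 (X ω)) / e1 (X ω)
          - (1 - A ω) * (Y ω - μ0 (X ω)) / (1 - e1 (X ω)))
      + (1 - π (X ω)) / (1 - q) * (μ1 (X ω) - μ0 (X ω) - τ))
    (hφKsq : Integrable (fun ω => φK ω ^ 2) P)
    (hgain : Integrable (fun ω =>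
      (μ1 (X ω) - μ0 (X ω) - τ) ^ 2 * π (X ω) * (1 - π (X ω))) P) :
    (∫ ω, φI ω ^ 2 ∂P) - (∫ ω, φK ω ^ 2 ∂P)
      = (∫ ω, (μ1 (X ω) - μ0 (X ω) - τ) ^ 2 * π (X ω) * (1 - π (X ω)) ∂P)
          / (1 - q) ^ 2
    ∧ 0 ≤ (∫ ω, (μ1 (X ω) - μ0 (X ω) - τ) ^ 2 * π (X ω) * (1 - π (X ω)) ∂P)
          / (1 - q) ^ 2
    ∧ ((∫ ω, (μ1 (X ω) - μ0 (X ω) - τ) ^ 2 * π (X ω) * (1 - π (X ω)) ∂P)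
          / (1 - q) ^ 2 = 0
        ↔ ∀ᵐ ω ∂P, μ1 (X ω) - μ0 (X ω) = τ) := by
  have hcond := condExp_eif_sq_sub_sq hX hA hG hY0 hY1 hAbin hGbin hcons he1m hπm hμ0m hμ1m
    hπ he1 hμ1 hμ0 hφI hφK (hφIsq.sub hφKsq)
  refine ⟨?_, div_nonneg (integral_nonneg_of_ae (ae_nonneg_sq_mul_mul_one_sub hposπ))
    (sq_nonneg _), ?_⟩
  · rw [← integral_sub hφIsq hφKsq, ← integral_condExp (mX_le hX), integral_congr_ae hcond,
      integral_div]
  · rw [div_eq_zero_iff, or_iff_left (pow_ne_zero 2 (sub_ne_zero.2 hq1.ne')),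
      integral_sq_mul_mul_one_sub_eq_zero_iff (f := fun ω => μ1 (X ω) - μ0 (X ω) - τ) hposπ hgain]
    simp only [sub_eq_zero]

theorem known_sampling_score_efficiency_gain
    {Ω : Type*} [MeasurableSpace Ω] (P : Measure Ω) [IsProbabilityMeasure P]
    (X A G Y0 Y1 Y : Ω → ℝ)
    (hX : Measurable X) (hA : Measurable A) (hG : Measurable G)
    (hY0m : Measurable Y0) (hY1m : Measurable Y1)
    (hY0 : Integrable Y0 P) (hY1 : Integrable Y1 P)
    (hAbin : ∀ ω, A ω = 0 ∨ A ω = 1) (hGbin : ∀ ω, G ω = 0 ∨ G ω = 1)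
    (hcons : ∀ ω, Y ω = A ω * Y1 ω + (1 - A ω) * Y0 ω)
    (e1 π μ0 μ1 : ℝ → ℝ)
    (he1m : Measurable e1) (hπm : Measurable π)
    (hμ0m : Measurable μ0) (hμ1m : Measurable μ1)
    (hπ : (fun ω => π (X ω)) =ᵐ[P] P[G | mX X])
    (he1 : (fun ω => e1 (X ω) * π (X ω)) =ᵐ[P] P[fun ω => A ω * G ω | mX X])
    (hpose : ∀ᵐ ω ∂P, 0 < e1 (X ω) ∧ e1 (X ω) < 1)
    (hposπ : ∀ᵐ ω ∂P, 0 < π (X ω) ∧ π (X ω) < 1)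
    (hunconf : ∀ f : ℝ × ℝ → ℝ, Measurable f → (∃ C, ∀ p, |f p| ≤ C) →
      P[fun ω => G ω * A ω * f (Y0 ω, Y1 ω) | mX X]
        =ᵐ[P] fun ω => e1 (X ω) * (P[fun ω => G ω * f (Y0 ω, Y1 ω) | mX X]) ω)
    (htrans : ∀ f : ℝ × ℝ → ℝ, Measurable f → (∃ C, ∀ p, |f p| ≤ C) →
      P[fun ω => G ω * f (Y0 ω, Y1 ω) | mX X]
        =ᵐ[P] fun ω => π (X ω) * (P[fun ω => f (Y0 ω, Y1 ω) | mX X]) ω)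
    (hμ1 : (fun ω => μ1 (X ω) * e1 (X ω) * π (X ω)) =ᵐ[P]
      P[fun ω => A ω * G ω * Y ω | mX X])
    (hμ0 : (fun ω => μ0 (X ω) * (1 - e1 (X ω)) * π (X ω)) =ᵐ[P]
      P[fun ω => (1 - A ω) * G ω * Y ω | mX X])
    (q τ : ℝ)
    (hq : q = (P {ω | G ω = 1}).toReal) (hq0 : 0 < q) (hq1 : q < 1)
    (hτ : τ = (∫ ω, (1 - G ω) * (Y1 ω - Y0 ω) ∂P) / (1 - q))
    (φI : Ω → ℝ)
    (hφI : ∀ ω, φI ω =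
      G ω / (1 - q) * ((1 - π (X ω)) / π (X ω)) *
        (A ω * (Y ω - μ1 (X ω)) / e1 (X ω)
          - (1 - A ω) * (Y ω - μ0 (X ω)) / (1 - e1 (X ω)))
      + (1 - G ω) / (1 - q) * (μ1 (X ω) - μ0 (X ω) - τ))
    (hφIsq : Integrable (fun ω => φI ω ^ 2) P)
    (φK : Ω → ℝ)
    (hφK : ∀ ω, φK ω =
      G ω / (1 - q) * ((1 - π (X ω)) / π (X ω)) *
        (A ω * (Y ω - μ1 (X ω)) / e1 (X ω)
          - (1 - A ω) * (Y ω - μ0 (X ω)) / (1 - e1 (X ω)))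
      + (1 - π (X ω)) / (1 - q) * (μ1 (X ω) - μ0 (X ω) - τ))
    (hφKsq : Integrable (fun ω => φK ω ^ 2) P)
    (hgain : Integrable (fun ω =>
      (μ1 (X ω) - μ0 (X ω) - τ) ^ 2 * π (X ω) * (1 - π (X ω))) P) :
    (∫ ω, φI ω ^ 2 ∂P) - (∫ ω, φK ω ^ 2 ∂P)
      = (∫ ω, (μ1 (X ω) - μ0 (X ω) - τ) ^ 2 * π (X ω) * (1 - π (X ω)) ∂P)
          / (1 - q) ^ 2
    ∧ 0 ≤ (∫ ω, (μ1 (X ω) - μ0 (X ω) - τ) ^ 2 * π (X ω) * (1 - π (X ω)) ∂P)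
          / (1 - q) ^ 2
    ∧ ((∫ ω, (μ1 (X ω) - μ0 (X ω) - τ) ^ 2 * π (X ω) * (1 - π (X ω)) ∂P)
          / (1 - q) ^ 2 = 0
        ↔ ∀ᵐ ω ∂P, μ1 (X ω) - μ0 (X ω) = τ) :=
  known_sampling_score_efficiency_gain_general P X A G Y0 Y1 Y hX hA hG hY0 hY1 hAbin hGbin hcons e1
    π μ0 μ1 he1m hπm hμ0m hμ1m hπ he1 hposπ hμ1 hμ0 q τ hq1 φI hφI hφIsq φK hφK hφKsq hgain
end

section
/- Under the posterior drift assumption, τ = E[ ψ1(μ1(X)) − ψ0(μ0(X)) | G=0 ], where ψ0, ψ1 are the known drift functions satisfying E[Y(0)|X,G=0] = ψ0(μ0(X)) and E[Y(1)|X,G=0] = ψ1(μ1(X)) with μa(X) = E[Y(a)|X,G=1]. -/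
/-! The drift assumption is a statement about `E[(1 - G) Y | X]`, so by the tower property
`E[(1 - G) Y] = E[ψ(μ(X)) (1 - π(X))]`; pulling the `X`-measurable factor `ψ(μ(X))` back out of
`1 - π(X) = E[1 - G | X]` turns this into `E[(1 - G) ψ(μ(X))]`. -/

open MeasureTheory ProbabilityTheory

section

variable {Ω : Type*} {m m₀ : MeasurableSpace Ω} {μ : Measure Ω}

theorem condExp_one_sub [IsFiniteMeasure μ] (hm : m ≤ m₀) {G : Ω → ℝ} (hG : Integrable G μ) :
    μ[fun ω => 1 - G ω | m] =ᵐ[μ] fun ω => 1 - μ[G | m] ω := by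
  filter_upwards [condExp_sub (integrable_const 1) hG m] with ω hω
  rw [Pi.sub_apply, condExp_const hm] at hω
  exact hω

theorem integral_mul_eq_of_condExp_mul_eq (hm : m ≤ m₀) [SigmaFinite (μ.trim hm)]
    {W Y f : Ω → ℝ} (hf : StronglyMeasurable[m] f) (hW : Integrable W μ)
    (hWf : Integrable (W * f) μ) (hWY : μ[W * Y | m] =ᵐ[μ] f * μ[W | m]) :
    ∫ ω, W ω * Y ω ∂μ = ∫ ω, W ω * f ω ∂μ := by
  have hfW : Integrable (f * W) μ := mul_comm W f ▸ hWf
  calc ∫ ω, W ω * Y ω ∂μ = ∫ ω, μ[W * Y | m] ω ∂μ := (integral_condExp hm).symm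
    _ = ∫ ω, (f * μ[W | m]) ω ∂μ := integral_congr_ae hWY
    _ = ∫ ω, μ[f * W | m] ω ∂μ :=
      integral_congr_ae (condExp_mul_of_stronglyMeasurable_left hf hfW hW).symm
    _ = ∫ ω, W ω * f ω ∂μ := by simp_rw [integral_condExp hm, Pi.mul_apply, mul_comm]

end

theorem posterior_drift_identification_general
    {Ω : Type*} [MeasurableSpace Ω] (P : Measure Ω) [IsProbabilityMeasure P]
    (X G Y0 Y1 : Ω → ℝ)
    (hX : Measurable X) (hG : Measurable G)
    (hY0 : Integrable Y0 P) (hY1 : Integrable Y1 P)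
    (hGbin : ∀ ω, G ω = 0 ∨ G ω = 1)
    (π μ0 μ1 ψ0 ψ1 : ℝ → ℝ)
    (hμ0m : Measurable μ0) (hμ1m : Measurable μ1)
    (hψ0m : Measurable ψ0) (hψ1m : Measurable ψ1)
    (hπ : (fun ω => π (X ω)) =ᵐ[P] P[G | mX X])
    (hdrift1 : (fun ω => ψ1 (μ1 (X ω)) * (1 - π (X ω))) =ᵐ[P]
      P[fun ω => (1 - G ω) * Y1 ω | mX X])
    (hdrift0 : (fun ω => ψ0 (μ0 (X ω)) * (1 - π (X ω))) =ᵐ[P]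
      P[fun ω => (1 - G ω) * Y0 ω | mX X])
    (hint1 : Integrable (fun ω => ψ1 (μ1 (X ω))) P)
    (hint0 : Integrable (fun ω => ψ0 (μ0 (X ω))) P) :
    ∫ ω, (1 - G ω) * (Y1 ω - Y0 ω) ∂P
      = ∫ ω, (1 - G ω) * (ψ1 (μ1 (X ω)) - ψ0 (μ0 (X ω))) ∂P := by
  have hm : mX X ≤ ‹MeasurableSpace Ω› := hX.comap_le
  have hG_le : ∀ ω, ‖G ω‖ ≤ 1 := fun ω => by rcases hGbin ω with h | h <;> simp [h]
  have hW_le : ∀ ω, ‖1 - G ω‖ ≤ 1 := fun ω => by rcases hGbin ω with h | h <;> simp [h]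
  have hWm : AEStronglyMeasurable (fun ω => 1 - G ω) P :=
    (measurable_const.sub hG).aestronglyMeasurable
  have hW_int : Integrable (fun ω => 1 - G ω) P := .of_bound hWm 1 (.of_forall hW_le)
  have hW_mul {f : Ω → ℝ} (hf : Integrable f P) : Integrable (fun ω => (1 - G ω) * f ω) P :=
    hf.bdd_mul hWm (.of_forall hW_le)
  have hcondW : P[fun ω => 1 - G ω | mX X] =ᵐ[P] fun ω => 1 - π (X ω) := by
    filter_upwards [condExp_one_sub hm (.of_bound hG.aestronglyMeasurable 1 (.of_forall hG_le)),
      hπ] with ω hω hπω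
    rw [hω, hπω]
  have hX_meas : Measurable[mX X] X := comap_measurable X
  have h1 := integral_mul_eq_of_condExp_mul_eq hm
    ((hψ1m.comp hμ1m).comp hX_meas).stronglyMeasurable hW_int (hW_mul hint1)
    (hdrift1.symm.trans (Filter.EventuallyEq.rfl.mul hcondW.symm))
  have h0 := integral_mul_eq_of_condExp_mul_eq hm
    ((hψ0m.comp hμ0m).comp hX_meas).stronglyMeasurable hW_int (hW_mul hint0)
    (hdrift0.symm.trans (Filter.EventuallyEq.rfl.mul hcondW.symm))
  simp only [mul_sub]
  rw [integral_sub (hW_mul hY1) (hW_mul hY0), integral_sub (hW_mul hint1) (hW_mul hint0)]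
  exact congrArg₂ _ h1 h0

theorem posterior_drift_identification
    {Ω : Type*} [MeasurableSpace Ω] (P : Measure Ω) [IsProbabilityMeasure P]
    (X G Y0 Y1 : Ω → ℝ)
    (hX : Measurable X) (hG : Measurable G)
    (hY0m : Measurable Y0) (hY1m : Measurable Y1)
    (hY0 : Integrable Y0 P) (hY1 : Integrable Y1 P)
    (hGbin : ∀ ω, G ω = 0 ∨ G ω = 1)
    (π μ0 μ1 ψ0 ψ1 : ℝ → ℝ)
    (hπm : Measurable π) (hμ0m : Measurable μ0) (hμ1m : Measurable μ1)
    (hψ0m : Measurable ψ0) (hψ1m : Measurable ψ1)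
    (hπ : (fun ω => π (X ω)) =ᵐ[P] P[G | mX X])
    (hposπ : ∀ᵐ ω ∂P, 0 < π (X ω) ∧ π (X ω) < 1)
    (hsrc1 : (fun ω => μ1 (X ω) * π (X ω)) =ᵐ[P] P[fun ω => G ω * Y1 ω | mX X])
    (hsrc0 : (fun ω => μ0 (X ω) * π (X ω)) =ᵐ[P] P[fun ω => G ω * Y0 ω | mX X])
    (hdrift1 : (fun ω => ψ1 (μ1 (X ω)) * (1 - π (X ω))) =ᵐ[P]
      P[fun ω => (1 - G ω) * Y1 ω | mX X])
    (hdrift0 : (fun ω => ψ0 (μ0 (X ω)) * (1 - π (X ω))) =ᵐ[P]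
      P[fun ω => (1 - G ω) * Y0 ω | mX X])
    (hint1 : Integrable (fun ω => ψ1 (μ1 (X ω))) P)
    (hint0 : Integrable (fun ω => ψ0 (μ0 (X ω))) P) :
    ∫ ω, (1 - G ω) * (Y1 ω - Y0 ω) ∂P
      = ∫ ω, (1 - G ω) * (ψ1 (μ1 (X ω)) - ψ0 (μ0 (X ω))) ∂P :=
  posterior_drift_identification_general P X G Y0 Y1 hX hG hY0 hY1 hGbin π μ0 μ1 ψ0 ψ1 hμ0m hμ1m
    hψ0m hψ1m hπ hdrift1 hdrift0 hint1 hint0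
end

section
/- The ATT influence function in the target population has mean zero: under the setting-II assumptions, E[ (G/((1−q)e0))·( A(Y−μ1(X))/e1(X) − (1−A)(Y−μ0(X))/(1−e1(X)) )·((1−π(X))e0(X)/π(X)) + ((1−G)A/((1−q)e0))·(μ1(X)−μ0(X)−τ_att) ] = 0, where τ_att = E[Y(1)−Y(0)|G=0,A=1] and e0 = P(A=1|G=0). -/
/-!
Condition on `X`. In the source population the hypotheses on `μ₁, μ₀, e₁, π` say exactly that
`E[AGY | X] = μ₁(X) E[AG | X]` and `E[(1-A)GY | X] = μ₀(X) E[(1-A)G | X]`, so the two source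
terms of the influence function, being functions of `X` times `AG(Y - μ₁)` resp.
`(1-A)G(Y - μ₀)`, have conditional mean zero. For the target term, unconfoundedness and
transportability identify `μₐ(X)` with `E[Y(a) | X]` and give
`E[A(1-G)(Y(1) - Y(0)) | X] = (μ₁ - μ₀)(X) E[A(1-G) | X]`; after integrating,
`E[(μ₁(X) - μ₀(X) - τ) A(1-G)] = 0` is the definition of `τ`.

The independence hypotheses are stated for bounded functions of `(Y(0), Y(1))` only; they extend
to integrable ones by truncation and the L¹-continuity of conditional expectation.
-/

open MeasureTheory ProbabilityTheory

open Filter Topology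

def IsBinary {Ω : Type*} (B : Ω → ℝ) : Prop :=
  ∀ ω, B ω = 0 ∨ B ω = 1

namespace IsBinary

variable {Ω : Type*} {mΩ : MeasurableSpace Ω} {P : Measure Ω} {B B' Z : Ω → ℝ}

theorem mul (hB : IsBinary B) (hB' : IsBinary B') : IsBinary fun ω => B ω * B' ω := fun ω => by
  rcases hB ω with h | h <;> simp [h, hB' ω]

theorem one_sub (hB : IsBinary B) : IsBinary fun ω => 1 - B ω := fun ω => by
  rcases hB ω with h | h <;> simp [h]

theorem norm_le_one (hB : IsBinary B) (ω : Ω) : ‖B ω‖ ≤ 1 := by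
  rcases hB ω with h | h <;> simp [h]

theorem integrable [IsFiniteMeasure P] (hB : IsBinary B) (hBm : AEStronglyMeasurable B P) :
    Integrable B P :=
  .of_bound hBm 1 (ae_of_all _ hB.norm_le_one)

theorem integrable_mul (hB : IsBinary B) (hBm : AEStronglyMeasurable B P) (hZ : Integrable Z P) :
    Integrable (fun ω => B ω * Z ω) P :=
  hZ.bdd_mul hBm (ae_of_all _ hB.norm_le_one)

end IsBinary

section ConditionalExpectation

variable {Ω β : Type*} {m mΩ : MeasurableSpace Ω} [MeasurableSpace β] {P : Measure Ω}
  {W : Ω → β}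

theorem condExp_mul_comp_ae_eq_of_forall_bounded_s16 (hW : Measurable W) {B D : Ω → ℝ}
    {CB CD : ℝ} (hB : AEStronglyMeasurable B P) (hD : AEStronglyMeasurable D P)
    (hBC : ∀ᵐ ω ∂P, ‖B ω‖ ≤ CB) (hDC : ∀ᵐ ω ∂P, ‖D ω‖ ≤ CD)
    (H : ∀ f : β → ℝ, Measurable f → (∃ C, ∀ p, |f p| ≤ C) →
      P[fun ω => B ω * f (W ω) | m] =ᵐ[P] P[fun ω => D ω * f (W ω) | m])
    {f : β → ℝ} (hf : Measurable f) (hfW : Integrable (fun ω => f (W ω)) P) :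
    P[fun ω => B ω * f (W ω) | m] =ᵐ[P] P[fun ω => D ω * f (W ω) | m] := by
  set g : ℕ → β → ℝ := fun n => {p | |f p| ≤ n}.indicator f
  have hg : ∀ n, Measurable (g n) := fun n =>
    hf.indicator (measurableSet_le hf.abs measurable_const)
  have hgf : ∀ n p, ‖g n p‖ ≤ ‖f p‖ := fun n p => norm_indicator_le_norm_self f p
  have hgn : ∀ n p, |g n p| ≤ n := fun n p => by
    by_cases hp : |f p| ≤ n <;> simp [g, hp]
  have hg_lim : ∀ p, Tendsto (fun n => g n p) atTop (𝓝 (f p)) := fun p =>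
    tendsto_const_nhds.congr' <| (eventually_ge_atTop ⌈|f p|⌉₊).mono fun n hn => by
      simp [g, Nat.ceil_le.1 hn]
  have hgW : ∀ n, Integrable (fun ω => g n (W ω)) P := fun n =>
    hfW.mono ((hg n).comp hW).aestronglyMeasurable (ae_of_all _ fun ω => hgf n (W ω))
  have hbound : ∀ (E : Ω → ℝ) (C : ℝ), (∀ᵐ ω ∂P, ‖E ω‖ ≤ C) →
      ∀ n, ∀ᵐ ω ∂P, ‖E ω * g n (W ω)‖ ≤ C * ‖f (W ω)‖ := fun E C hE n => by
    filter_upwards [hE] with ω hω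
    rw [norm_mul]
    exact mul_le_mul hω (hgf n _) (norm_nonneg _) ((norm_nonneg _).trans hω)
  exact tendsto_condExp_unique (fun n ω => B ω * g n (W ω)) (fun n ω => D ω * g n (W ω)) _ _
    (fun n => (hgW n).bdd_mul hB hBC) (fun n => (hgW n).bdd_mul hD hDC)
    (ae_of_all _ fun ω => tendsto_const_nhds.mul (hg_lim (W ω)))
    (ae_of_all _ fun ω => tendsto_const_nhds.mul (hg_lim (W ω)))
    _ (hfW.norm.const_mul CB) _ (hfW.norm.const_mul CD) (hbound B CB hBC) (hbound D CD hDC)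
    fun n => H (g n) (hg n) ⟨n, hgn n⟩

theorem condExp_mul_comp_ae_eq_mul_of_forall_bounded [IsFiniteMeasure P] (hm : m ≤ mΩ)
    (hW : Measurable W) {B D c : Ω → ℝ} {C : ℝ} (hB : AEStronglyMeasurable B P)
    (hD : AEStronglyMeasurable D P) (hc : StronglyMeasurable[m] c)
    (hBC : ∀ᵐ ω ∂P, ‖B ω‖ ≤ C) (hDC : ∀ᵐ ω ∂P, ‖D ω‖ ≤ C) (hcC : ∀ᵐ ω ∂P, ‖c ω‖ ≤ C)
    (H : ∀ f : β → ℝ, Measurable f → (∃ C, ∀ p, |f p| ≤ C) →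
      P[fun ω => B ω * f (W ω) | m] =ᵐ[P] fun ω => c ω * P[fun ω => D ω * f (W ω) | m] ω)
    {f : β → ℝ} (hf : Measurable f) (hfW : Integrable (fun ω => f (W ω)) P) :
    P[fun ω => B ω * f (W ω) | m] =ᵐ[P] fun ω => c ω * P[fun ω => D ω * f (W ω) | m] ω := by
  have pull : ∀ f : β → ℝ, Integrable (fun ω => f (W ω)) P →
      P[fun ω => c ω * D ω * f (W ω) | m] =ᵐ[P]
        fun ω => c ω * P[fun ω => D ω * f (W ω) | m] ω := fun f hfW => by
    simp_rw [mul_assoc]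
    exact condExp_stronglyMeasurable_mul_of_bound hm hc (hfW.bdd_mul hD hDC) C hcC
  have hcDC : ∀ᵐ ω ∂P, ‖c ω * D ω‖ ≤ C * C := by
    filter_upwards [hcC, hDC] with ω hc hD
    rw [norm_mul]
    exact mul_le_mul hc hD (norm_nonneg _) ((norm_nonneg _).trans hc)
  refine (condExp_mul_comp_ae_eq_of_forall_bounded_s16 hW hB
    ((hc.mono hm).aestronglyMeasurable.mul hD) hBC hcDC
    (fun f hf hfC => (H f hf hfC).trans (pull f ?_).symm) hf hfW).trans (pull f hfW)
  obtain ⟨C', hC'⟩ := hfC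
  exact .of_bound (hf.comp hW).aestronglyMeasurable C' (ae_of_all _ fun ω => hC' (W ω))

theorem integral_mul_eq_zero_of_condExp_ae_eq [IsFiniteMeasure P] (hm : m ≤ mΩ)
    {k μ U Y ψ : Ω → ℝ} {C : ℝ} (hk : StronglyMeasurable[m] k) (hμ : StronglyMeasurable[m] μ)
    (hμi : Integrable μ P) (hU : AEStronglyMeasurable U P) (hUC : ∀ᵐ ω ∂P, ‖U ω‖ ≤ C)
    (hY : Integrable Y P) (hψ : Integrable ψ P)
    (hUψ : ∀ᵐ ω ∂P, U ω * ψ ω = k ω * (U ω * Y ω - μ ω * U ω))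
    (h : P[fun ω => U ω * Y ω | m] =ᵐ[P] μ * P[U | m]) :
    ∫ ω, U ω * ψ ω ∂P = 0 := by
  have hUY : Integrable (fun ω => U ω * Y ω) P := hY.bdd_mul hU hUC
  have hμU : Integrable (fun ω => μ ω * U ω) P := hμi.mul_bdd hU hUC
  have hcentered : P[fun ω => U ω * Y ω - μ ω * U ω | m] =ᵐ[P] 0 := by
    filter_upwards [condExp_sub hUY hμU m,
      condExp_mul_of_stronglyMeasurable_left hμ hμU (.of_bound hU C hUC), h] with ω h₁ h₂ h₃
    change P[(fun ω => U ω * Y ω) - fun ω => μ ω * U ω | m] ω = 0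
    rw [h₁, Pi.sub_apply, h₃]
    exact sub_eq_zero_of_eq h₂.symm
  rw [integral_congr_ae hUψ, ← integral_condExp hm]
  refine integral_eq_zero_of_ae ((condExp_mul_of_stronglyMeasurable_left hk
    ((hψ.bdd_mul hU hUC).congr hUψ) (hUY.sub hμU)).trans ?_)
  filter_upwards [hcentered] with ω hω
  simp [hω]

theorem integral_sub_mul_eq_zero_of_condExp_ae_eq [IsFiniteMeasure P] (hm : m ≤ mΩ)
    {μ U Y : Ω → ℝ} {τ C : ℝ} (hμ : StronglyMeasurable[m] μ) (hμi : Integrable μ P)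
    (hU : AEStronglyMeasurable U P) (hUC : ∀ᵐ ω ∂P, ‖U ω‖ ≤ C)
    (h : P[fun ω => U ω * Y ω | m] =ᵐ[P] μ * P[U | m])
    (hτ : ∫ ω, U ω * Y ω ∂P = τ * ∫ ω, U ω ∂P) :
    ∫ ω, (μ ω - τ) * U ω ∂P = 0 := by
  have hμU : Integrable (fun ω => μ ω * U ω) P := hμi.mul_bdd hU hUC
  have hUi : Integrable U P := .of_bound hU C hUC
  have htower : ∫ ω, μ ω * U ω ∂P = ∫ ω, U ω * Y ω ∂P := by
    rw [← integral_condExp hm, ← integral_condExp (f := fun ω => U ω * Y ω) hm]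
    exact integral_congr_ae
      ((condExp_mul_of_stronglyMeasurable_left hμ hμU hUi).trans h.symm)
  simp_rw [sub_mul]
  rw [integral_sub hμU (hUi.const_mul τ), integral_const_mul, htower, hτ, sub_self]

end ConditionalExpectation

theorem eif_cell_decomposition {a g y m₀ m₁ e p e₀ c τ φ : ℝ} (ha : a = 0 ∨ a = 1)
    (hg : g = 0 ∨ g = 1) (he : 0 < e ∧ e < 1) (hp : p ≠ 0) (hc : c ≠ 0)
    (hφ : φ = g / c * (a * (y - m₁) / e - (1 - a) * (y - m₀) / (1 - e)) * ((1 - p) * e₀ / p)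
      + (1 - g) * a / c * (m₁ - m₀ - τ)) :
    a * g * (c * φ) = (1 - p) * e₀ / p / e * (a * g * y - m₁ * (a * g)) ∧
    (1 - a) * g * (c * φ) =
      -((1 - p) * e₀ / p / (1 - e)) * ((1 - a) * g * y - m₀ * ((1 - a) * g)) ∧
    a * (1 - g) * (c * φ) = (m₁ - m₀ - τ) * (a * (1 - g)) ∧
    c * φ = a * g * (c * φ) + (1 - a) * g * (c * φ) + a * (1 - g) * (c * φ) := by
  have he₁ : 1 - e ≠ 0 := by linarith [he.2]
  subst hφ
  rcases ha with rfl | rfl <;> rcases hg with rfl | rfl <;>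
    refine ⟨?_, ?_, ?_, ?_⟩ <;> field_simp [he.1.ne'] <;> ring

section PotentialOutcomes

variable {Ω : Type*} {m mΩ : MeasurableSpace Ω} {P : Measure Ω}
  {A G Y Y0 Y1 e e₀ p μ μ₀ μ₁ : Ω → ℝ}

theorem ae_eq_condExp_of_regression_treated (hAbin : IsBinary A)
    (hcons : ∀ ω, Y ω = A ω * Y1 ω + (1 - A ω) * Y0 ω)
    (hμ : (fun ω => μ ω * e ω * p ω) =ᵐ[P] P[fun ω => A ω * G ω * Y ω | m])
    (hunconf : P[fun ω => G ω * A ω * Y1 ω | m] =ᵐ[P]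
      fun ω => e ω * P[fun ω => G ω * Y1 ω | m] ω)
    (htrans : P[fun ω => G ω * Y1 ω | m] =ᵐ[P] fun ω => p ω * P[Y1 | m] ω)
    (hpos : ∀ᵐ ω ∂P, e ω * p ω ≠ 0) :
    μ =ᵐ[P] P[Y1 | m] := by
  have hY : P[fun ω => A ω * G ω * Y ω | m] =ᵐ[P] P[fun ω => G ω * A ω * Y1 ω | m] :=
    condExp_congr_ae (ae_of_all _ fun ω => by rcases hAbin ω with h | h <;> simp [h, hcons ω])
  filter_upwards [hμ, hY, hunconf, htrans, hpos] with ω h₁ h₂ h₃ h₄ hω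
  refine mul_right_cancel₀ hω ?_
  linear_combination h₁ + h₂ + h₃ + e ω * h₄

theorem ae_eq_condExp_of_regression_control (hAbin : IsBinary A)
    (hcons : ∀ ω, Y ω = A ω * Y1 ω + (1 - A ω) * Y0 ω)
    (hGY0 : Integrable (fun ω => G ω * Y0 ω) P)
    (hGAY0 : Integrable (fun ω => G ω * A ω * Y0 ω) P)
    (hμ : (fun ω => μ ω * (1 - e ω) * p ω) =ᵐ[P] P[fun ω => (1 - A ω) * G ω * Y ω | m])
    (hunconf : P[fun ω => G ω * A ω * Y0 ω | m] =ᵐ[P]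
      fun ω => e ω * P[fun ω => G ω * Y0 ω | m] ω)
    (htrans : P[fun ω => G ω * Y0 ω | m] =ᵐ[P] fun ω => p ω * P[Y0 | m] ω)
    (hpos : ∀ᵐ ω ∂P, (1 - e ω) * p ω ≠ 0) :
    μ =ᵐ[P] P[Y0 | m] := by
  have hY : P[fun ω => (1 - A ω) * G ω * Y ω | m] =ᵐ[P]
      P[(fun ω => G ω * Y0 ω) - fun ω => G ω * A ω * Y0 ω | m] :=
    condExp_congr_ae (ae_of_all _ fun ω => by
      rcases hAbin ω with h | h <;> simp [h, hcons ω])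
  filter_upwards [hμ, hY, condExp_sub hGY0 hGAY0 m, hunconf, htrans, hpos]
    with ω h₁ h₂ h₃ h₄ h₅ hω
  rw [Pi.sub_apply] at h₃
  refine mul_right_cancel₀ hω ?_
  linear_combination h₁ + h₂ + h₃ - h₄ + (1 - e ω) * h₅

theorem condExp_treated_source_ae_eq
    (hμ : (fun ω => μ ω * e ω * p ω) =ᵐ[P] P[fun ω => A ω * G ω * Y ω | m])
    (he : (fun ω => e ω * p ω) =ᵐ[P] P[fun ω => A ω * G ω | m]) :
    P[fun ω => A ω * G ω * Y ω | m] =ᵐ[P] μ * P[fun ω => A ω * G ω | m] := by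
  filter_upwards [hμ, he] with ω h₁ h₂
  rw [Pi.mul_apply, ← h₁, ← h₂]
  ring

theorem condExp_control_source_ae_eq (hG : Integrable G P)
    (hAG : Integrable (fun ω => A ω * G ω) P)
    (hμ : (fun ω => μ ω * (1 - e ω) * p ω) =ᵐ[P] P[fun ω => (1 - A ω) * G ω * Y ω | m])
    (hp : p =ᵐ[P] P[G | m]) (he : (fun ω => e ω * p ω) =ᵐ[P] P[fun ω => A ω * G ω | m]) :
    P[fun ω => (1 - A ω) * G ω * Y ω | m] =ᵐ[P] μ * P[fun ω => (1 - A ω) * G ω | m] := by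
  have hU : P[fun ω => (1 - A ω) * G ω | m] =ᵐ[P] P[G - fun ω => A ω * G ω | m] :=
    condExp_congr_ae (ae_of_all _ fun ω => by simp only [Pi.sub_apply]; ring)
  filter_upwards [hμ, hp, he, hU, condExp_sub hG hAG m] with ω h₁ h₂ h₃ h₄ h₅
  rw [Pi.mul_apply, h₄, h₅, Pi.sub_apply, ← h₁, ← h₂, ← h₃]
  ring

theorem condExp_target_treated_ae_eq (hY1 : Integrable Y1 P) (hY0 : Integrable Y0 P)
    (hGY : Integrable (fun ω => G ω * (Y1 ω - Y0 ω)) P)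
    (hunconf : P[fun ω => (1 - G ω) * A ω * (Y1 ω - Y0 ω) | m] =ᵐ[P]
      fun ω => e₀ ω * P[fun ω => (1 - G ω) * (Y1 ω - Y0 ω) | m] ω)
    (htrans : P[fun ω => G ω * (Y1 ω - Y0 ω) | m] =ᵐ[P]
      fun ω => p ω * P[fun ω => Y1 ω - Y0 ω | m] ω)
    (he₀ : (fun ω => e₀ ω * (1 - p ω)) =ᵐ[P] P[fun ω => A ω * (1 - G ω) | m])
    (hμ₁ : μ₁ =ᵐ[P] P[Y1 | m]) (hμ₀ : μ₀ =ᵐ[P] P[Y0 | m]) :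
    P[fun ω => A ω * (1 - G ω) * (Y1 ω - Y0 ω) | m] =ᵐ[P]
      (μ₁ - μ₀) * P[fun ω => A ω * (1 - G ω) | m] := by
  have hY : Integrable (fun ω => Y1 ω - Y0 ω) P := hY1.sub hY0
  have h₁ : P[fun ω => A ω * (1 - G ω) * (Y1 ω - Y0 ω) | m] =ᵐ[P]
      P[fun ω => (1 - G ω) * A ω * (Y1 ω - Y0 ω) | m] :=
    condExp_congr_ae (ae_of_all _ fun ω => by ring)
  have h₂ : P[fun ω => (1 - G ω) * (Y1 ω - Y0 ω) | m] =ᵐ[P]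
      P[(fun ω => Y1 ω - Y0 ω) - fun ω => G ω * (Y1 ω - Y0 ω) | m] :=
    condExp_congr_ae (ae_of_all _ fun ω => by simp only [Pi.sub_apply]; ring)
  have h₃ : P[fun ω => Y1 ω - Y0 ω | m] =ᵐ[P] P[Y1 | m] - P[Y0 | m] := condExp_sub hY1 hY0 m
  filter_upwards [h₁, hunconf, h₂, condExp_sub hY hGY m, htrans, h₃, he₀, hμ₁, hμ₀]
    with ω h₁ h₂ h₃ h₄ h₅ h₆ h₇ h₈ h₉
  rw [Pi.sub_apply] at h₄ h₆
  rw [Pi.mul_apply, Pi.sub_apply, h₁, h₂, h₃, h₄, h₅, h₆, ← h₇, h₈, h₉]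
  ring

theorem integral_eif_eq_zero_of_condExp_ae_eq [IsFiniteMeasure P] (hm : m ≤ mΩ)
    {φ : Ω → ℝ} {c τ : ℝ} (hA : IsBinary A) (hG : IsBinary G) (hAm : Measurable A)
    (hGm : Measurable G) (hY : Integrable Y P) (he : Measurable[m] e) (hp : Measurable[m] p)
    (he₀ : Measurable[m] e₀) (hμ₀ : Measurable[m] μ₀) (hμ₁ : Measurable[m] μ₁)
    (hμ₀i : Integrable μ₀ P) (hμ₁i : Integrable μ₁ P) (he01 : ∀ᵐ ω ∂P, 0 < e ω ∧ e ω < 1)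
    (hp0 : ∀ᵐ ω ∂P, p ω ≠ 0) (hc : c ≠ 0)
    (hφ : ∀ ω, φ ω =
      G ω / c * (A ω * (Y ω - μ₁ ω) / e ω - (1 - A ω) * (Y ω - μ₀ ω) / (1 - e ω))
        * ((1 - p ω) * e₀ ω / p ω)
      + (1 - G ω) * A ω / c * (μ₁ ω - μ₀ ω - τ))
    (hφi : Integrable φ P)
    (h₁ : P[fun ω => A ω * G ω * Y ω | m] =ᵐ[P] μ₁ * P[fun ω => A ω * G ω | m])
    (h₀ : P[fun ω => (1 - A ω) * G ω * Y ω | m] =ᵐ[P] μ₀ * P[fun ω => (1 - A ω) * G ω | m])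
    (hτ₁ : P[fun ω => A ω * (1 - G ω) * (Y1 ω - Y0 ω) | m] =ᵐ[P]
      (μ₁ - μ₀) * P[fun ω => A ω * (1 - G ω) | m])
    (hτ : ∫ ω, A ω * (1 - G ω) * (Y1 ω - Y0 ω) ∂P = τ * ∫ ω, A ω * (1 - G ω) ∂P) :
    ∫ ω, φ ω ∂P = 0 := by
  have hψ : Integrable (fun ω => c * φ ω) P := hφi.const_mul c
  have hcells := (he01.and hp0).mono fun ω h =>
    eif_cell_decomposition (hA ω) (hG ω) h.1 h.2 hc (hφ ω)
  have hI₁ : ∫ ω, A ω * G ω * (c * φ ω) ∂P = 0 :=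
    integral_mul_eq_zero_of_condExp_ae_eq hm (by fun_prop) hμ₁.stronglyMeasurable hμ₁i
      (by fun_prop) (ae_of_all _ (hA.mul hG).norm_le_one) hY hψ (hcells.mono fun ω h => h.1) h₁
  have hI₀ : ∫ ω, (1 - A ω) * G ω * (c * φ ω) ∂P = 0 :=
    integral_mul_eq_zero_of_condExp_ae_eq hm (by fun_prop) hμ₀.stronglyMeasurable hμ₀i
      (by fun_prop) (ae_of_all _ (hA.one_sub.mul hG).norm_le_one) hY hψ
      (hcells.mono fun ω h => h.2.1) h₀
  have hIτ : ∫ ω, A ω * (1 - G ω) * (c * φ ω) ∂P = 0 := by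
    rw [integral_congr_ae (hcells.mono fun ω h => h.2.2.1)]
    exact integral_sub_mul_eq_zero_of_condExp_ae_eq hm (hμ₁.sub hμ₀).stronglyMeasurable
      (hμ₁i.sub hμ₀i) (by fun_prop) (ae_of_all _ (hA.mul hG.one_sub).norm_le_one) hτ₁ hτ
  have hψ₁ := (hA.mul hG).integrable_mul (by fun_prop) hψ
  have hψ₀ := (hA.one_sub.mul hG).integrable_mul (by fun_prop) hψ
  have hψτ := (hA.mul hG.one_sub).integrable_mul (by fun_prop) hψ
  have hsum : ∫ ω, c * φ ω ∂P = 0 := by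
    rw [integral_congr_ae (hcells.mono fun ω h => h.2.2.2), integral_add _ hψτ,
      integral_add hψ₁ hψ₀, hI₁, hI₀, hIτ, add_zero, add_zero]
    exact hψ₁.add hψ₀
  rw [integral_const_mul] at hsum
  exact (mul_eq_zero.1 hsum).resolve_left hc

end PotentialOutcomes

section Identification

variable {Ω : Type*} [MeasurableSpace Ω] {P : Measure Ω} [IsFiniteMeasure P]
  {X A G Y0 Y1 Y : Ω → ℝ} {e1 π μ0 μ1 e0 : ℝ → ℝ}

theorem regressions_ae_eq_condExp_and_condExp_target_ae_eq
    (hX : Measurable X) (hA : Measurable A) (hG : Measurable G)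
    (hY0m : Measurable Y0) (hY1m : Measurable Y1)
    (hY0 : Integrable Y0 P) (hY1 : Integrable Y1 P)
    (hAbin : IsBinary A) (hGbin : IsBinary G)
    (hcons : ∀ ω, Y ω = A ω * Y1 ω + (1 - A ω) * Y0 ω)
    (he1m : Measurable e1) (hπm : Measurable π) (he0m : Measurable e0)
    (hpose : ∀ᵐ ω ∂P, 0 < e1 (X ω) ∧ e1 (X ω) < 1)
    (hposπ : ∀ᵐ ω ∂P, 0 < π (X ω) ∧ π (X ω) < 1)
    (hpose0 : ∀ᵐ ω ∂P, 0 < e0 (X ω) ∧ e0 (X ω) < 1)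
    (hunconf : ∀ f : ℝ × ℝ → ℝ, Measurable f → (∃ C, ∀ p, |f p| ≤ C) →
      P[fun ω => G ω * A ω * f (Y0 ω, Y1 ω) | mX X]
        =ᵐ[P] fun ω => e1 (X ω) * (P[fun ω => G ω * f (Y0 ω, Y1 ω) | mX X]) ω)
    (htrans : ∀ f : ℝ × ℝ → ℝ, Measurable f → (∃ C, ∀ p, |f p| ≤ C) →
      P[fun ω => G ω * f (Y0 ω, Y1 ω) | mX X]
        =ᵐ[P] fun ω => π (X ω) * (P[fun ω => f (Y0 ω, Y1 ω) | mX X]) ω)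
    (hunconf0 : ∀ f : ℝ × ℝ → ℝ, Measurable f → (∃ C, ∀ p, |f p| ≤ C) →
      P[fun ω => (1 - G ω) * A ω * f (Y0 ω, Y1 ω) | mX X]
        =ᵐ[P] fun ω => e0 (X ω) * (P[fun ω => (1 - G ω) * f (Y0 ω, Y1 ω) | mX X]) ω)
    (hμ1 : (fun ω => μ1 (X ω) * e1 (X ω) * π (X ω)) =ᵐ[P]
      P[fun ω => A ω * G ω * Y ω | mX X])
    (hμ0 : (fun ω => μ0 (X ω) * (1 - e1 (X ω)) * π (X ω)) =ᵐ[P]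
      P[fun ω => (1 - A ω) * G ω * Y ω | mX X])
    (he0 : (fun ω => e0 (X ω) * (1 - π (X ω))) =ᵐ[P] P[fun ω => A ω * (1 - G ω) | mX X]) :
    (fun ω => μ1 (X ω)) =ᵐ[P] P[Y1 | mX X] ∧ (fun ω => μ0 (X ω)) =ᵐ[P] P[Y0 | mX X] ∧
      P[fun ω => A ω * (1 - G ω) * (Y1 ω - Y0 ω) | mX X] =ᵐ[P]
        (fun ω => μ1 (X ω) - μ0 (X ω)) * P[fun ω => A ω * (1 - G ω) | mX X] := by
  have hm : mX X ≤ ‹MeasurableSpace Ω› := hX.comap_le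
  have hXm : Measurable[mX X] X := comap_measurable X
  have hW : Measurable fun ω => (Y0 ω, Y1 ω) := by fun_prop
  have hunit : ∀ u : ℝ → ℝ, (∀ᵐ ω ∂P, 0 < u (X ω) ∧ u (X ω) < 1) → ∀ᵐ ω ∂P, ‖u (X ω)‖ ≤ 1 :=
    fun u hu => hu.mono fun ω h => abs_le.2 ⟨by linarith, h.2.le⟩
  have hunconf' := fun f (hf : Measurable f) => condExp_mul_comp_ae_eq_mul_of_forall_bounded hm
    hW (by fun_prop) (by fun_prop) (by fun_prop) (ae_of_all _ (hGbin.mul hAbin).norm_le_one)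
    (ae_of_all _ hGbin.norm_le_one) (hunit e1 hpose) hunconf hf
  have hunconf0' := fun f (hf : Measurable f) => condExp_mul_comp_ae_eq_mul_of_forall_bounded hm
    hW (by fun_prop) (by fun_prop) (by fun_prop) (ae_of_all _ (hGbin.one_sub.mul hAbin).norm_le_one)
    (ae_of_all _ hGbin.one_sub.norm_le_one) (hunit e0 hpose0) hunconf0 hf
  have htrans' : ∀ f : ℝ × ℝ → ℝ, Measurable f → Integrable (fun ω => f (Y0 ω, Y1 ω)) P →
      P[fun ω => G ω * f (Y0 ω, Y1 ω) | mX X]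
        =ᵐ[P] fun ω => π (X ω) * P[fun ω => f (Y0 ω, Y1 ω) | mX X] ω := fun f hf hfW => by
    simpa only [one_mul] using condExp_mul_comp_ae_eq_mul_of_forall_bounded hm hW
      (D := fun _ => 1) (c := fun ω => π (X ω)) (by fun_prop) (by fun_prop) (by fun_prop)
      (ae_of_all _ hGbin.norm_le_one) (ae_of_all _ fun ω => by simp) (hunit π hposπ)
      (fun f hf hfC => by simpa only [one_mul] using htrans f hf hfC) hf hfW
  have hμ1Y1 := ae_eq_condExp_of_regression_treated hAbin hcons hμ1
    (hunconf' (fun p => p.2) measurable_snd hY1) (htrans' (fun p => p.2) measurable_snd hY1)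
    (by filter_upwards [hpose, hposπ] with ω h h'; exact (mul_pos h.1 h'.1).ne')
  have hμ0Y0 := ae_eq_condExp_of_regression_control hAbin hcons
    (hGbin.integrable_mul (by fun_prop) hY0) ((hGbin.mul hAbin).integrable_mul (by fun_prop) hY0)
    hμ0 (hunconf' (fun p => p.1) measurable_fst hY0) (htrans' (fun p => p.1) measurable_fst hY0)
    (by filter_upwards [hpose, hposπ] with ω h h'; exact (mul_pos (by linarith [h.2]) h'.1).ne')
  refine ⟨hμ1Y1, hμ0Y0, condExp_target_treated_ae_eq hY1 hY0
    (hGbin.integrable_mul (by fun_prop) (hY1.sub hY0))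
    (hunconf0' (fun p => p.2 - p.1) (by fun_prop) (hY1.sub hY0))
    (htrans' (fun p => p.2 - p.1) (by fun_prop) (hY1.sub hY0)) he0 hμ1Y1 hμ0Y0⟩

end Identification

theorem target_att_eif_mean_zero_general
    {Ω : Type*} [MeasurableSpace Ω] (P : Measure Ω) [IsProbabilityMeasure P]
    (X A G Y0 Y1 Y : Ω → ℝ)
    (hX : Measurable X) (hA : Measurable A) (hG : Measurable G)
    (hY0m : Measurable Y0) (hY1m : Measurable Y1)
    (hY0 : Integrable Y0 P) (hY1 : Integrable Y1 P)
    (hAbin : ∀ ω, A ω = 0 ∨ A ω = 1) (hGbin : ∀ ω, G ω = 0 ∨ G ω = 1)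
    (hcons : ∀ ω, Y ω = A ω * Y1 ω + (1 - A ω) * Y0 ω)
    (e1 π μ0 μ1 : ℝ → ℝ)
    (he1m : Measurable e1) (hπm : Measurable π)
    (hμ0m : Measurable μ0) (hμ1m : Measurable μ1)
    (hπ : (fun ω => π (X ω)) =ᵐ[P] P[G | mX X])
    (he1 : (fun ω => e1 (X ω) * π (X ω)) =ᵐ[P] P[fun ω => A ω * G ω | mX X])
    (hpose : ∀ᵐ ω ∂P, 0 < e1 (X ω) ∧ e1 (X ω) < 1)
    (hposπ : ∀ᵐ ω ∂P, 0 < π (X ω) ∧ π (X ω) < 1)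
    (hunconf : ∀ f : ℝ × ℝ → ℝ, Measurable f → (∃ C, ∀ p, |f p| ≤ C) →
      P[fun ω => G ω * A ω * f (Y0 ω, Y1 ω) | mX X]
        =ᵐ[P] fun ω => e1 (X ω) * (P[fun ω => G ω * f (Y0 ω, Y1 ω) | mX X]) ω)
    (htrans : ∀ f : ℝ × ℝ → ℝ, Measurable f → (∃ C, ∀ p, |f p| ≤ C) →
      P[fun ω => G ω * f (Y0 ω, Y1 ω) | mX X]
        =ᵐ[P] fun ω => π (X ω) * (P[fun ω => f (Y0 ω, Y1 ω) | mX X]) ω)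
    (hμ1 : (fun ω => μ1 (X ω) * e1 (X ω) * π (X ω)) =ᵐ[P]
      P[fun ω => A ω * G ω * Y ω | mX X])
    (hμ0 : (fun ω => μ0 (X ω) * (1 - e1 (X ω)) * π (X ω)) =ᵐ[P]
      P[fun ω => (1 - A ω) * G ω * Y ω | mX X])
    (e0 : ℝ → ℝ) (he0m : Measurable e0)
    (he0 : (fun ω => e0 (X ω) * (1 - π (X ω))) =ᵐ[P] P[fun ω => A ω * (1 - G ω) | mX X])
    (hpose0 : ∀ᵐ ω ∂P, 0 < e0 (X ω) ∧ e0 (X ω) < 1)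
    (hunconf0 : ∀ f : ℝ × ℝ → ℝ, Measurable f → (∃ C, ∀ p, |f p| ≤ C) →
      P[fun ω => (1 - G ω) * A ω * f (Y0 ω, Y1 ω) | mX X]
        =ᵐ[P] fun ω => e0 (X ω) * (P[fun ω => (1 - G ω) * f (Y0 ω, Y1 ω) | mX X]) ω)
    (q ebar τatt : ℝ)
    (hebar : ebar = (∫ ω, A ω * (1 - G ω) ∂P) / (1 - q))
    (hτatt : τatt = (∫ ω, A ω * (1 - G ω) * (Y1 ω - Y0 ω) ∂P) / ((1 - q) * ebar))
    (φatt : Ω → ℝ)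
    (hφatt : ∀ ω, φatt ω =
      G ω / ((1 - q) * ebar) *
        (A ω * (Y ω - μ1 (X ω)) / e1 (X ω)
          - (1 - A ω) * (Y ω - μ0 (X ω)) / (1 - e1 (X ω)))
        * ((1 - π (X ω)) * e0 (X ω) / π (X ω))
      + (1 - G ω) * A ω / ((1 - q) * ebar) * (μ1 (X ω) - μ0 (X ω) - τatt))
    (hφattint : Integrable φatt P) :
    ∫ ω, φatt ω ∂P = 0 := by
  have hm : mX X ≤ ‹MeasurableSpace Ω› := hX.comap_le
  have hXm : Measurable[mX X] X := comap_measurable X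
  rcases eq_or_ne ((1 - q) * ebar) 0 with hc | hc
  · -- division by zero makes `φatt` vanish identically
    simp [hφatt, hc]
  obtain ⟨hμ1Y1, hμ0Y0, htarget⟩ := regressions_ae_eq_condExp_and_condExp_target_ae_eq hX hA hG
    hY0m hY1m hY0 hY1 hAbin hGbin hcons he1m hπm he0m hpose hposπ hpose0 hunconf htrans hunconf0
    hμ1 hμ0 he0
  have hY : Integrable Y P := ((IsBinary.integrable_mul hAbin (by fun_prop) hY1).add
    ((IsBinary.one_sub hAbin).integrable_mul (by fun_prop) hY0)).congr
    (ae_of_all _ fun ω => (hcons ω).symm)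
  have hD : ∫ ω, A ω * (1 - G ω) ∂P = (1 - q) * ebar := by
    rw [hebar]; field_simp [left_ne_zero_of_mul hc]
  exact integral_eif_eq_zero_of_condExp_ae_eq hm hAbin hGbin hA hG hY (by fun_prop)
    (by fun_prop) (by fun_prop) (by fun_prop) (by fun_prop)
    (integrable_condExp.congr hμ0Y0.symm) (integrable_condExp.congr hμ1Y1.symm) hpose
    (hposπ.mono fun ω h => h.1.ne') hc hφatt hφattint (condExp_treated_source_ae_eq hμ1 he1)
    (condExp_control_source_ae_eq (IsBinary.integrable hGbin (by fun_prop))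
      ((IsBinary.mul hAbin hGbin).integrable (by fun_prop)) hμ0 hπ he1)
    htarget (by rw [hτatt, hD, div_mul_cancel₀ _ hc])

theorem target_att_eif_mean_zero
    {Ω : Type*} [MeasurableSpace Ω] (P : Measure Ω) [IsProbabilityMeasure P]
    (X A G Y0 Y1 Y : Ω → ℝ)
    (hX : Measurable X) (hA : Measurable A) (hG : Measurable G)
    (hY0m : Measurable Y0) (hY1m : Measurable Y1)
    (hY0 : Integrable Y0 P) (hY1 : Integrable Y1 P)
    (hAbin : ∀ ω, A ω = 0 ∨ A ω = 1) (hGbin : ∀ ω, G ω = 0 ∨ G ω = 1)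
    (hcons : ∀ ω, Y ω = A ω * Y1 ω + (1 - A ω) * Y0 ω)
    (e1 π μ0 μ1 : ℝ → ℝ)
    (he1m : Measurable e1) (hπm : Measurable π)
    (hμ0m : Measurable μ0) (hμ1m : Measurable μ1)
    (hπ : (fun ω => π (X ω)) =ᵐ[P] P[G | mX X])
    (he1 : (fun ω => e1 (X ω) * π (X ω)) =ᵐ[P] P[fun ω => A ω * G ω | mX X])
    (hpose : ∀ᵐ ω ∂P, 0 < e1 (X ω) ∧ e1 (X ω) < 1)
    (hposπ : ∀ᵐ ω ∂P, 0 < π (X ω) ∧ π (X ω) < 1)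
    (hunconf : ∀ f : ℝ × ℝ → ℝ, Measurable f → (∃ C, ∀ p, |f p| ≤ C) →
      P[fun ω => G ω * A ω * f (Y0 ω, Y1 ω) | mX X]
        =ᵐ[P] fun ω => e1 (X ω) * (P[fun ω => G ω * f (Y0 ω, Y1 ω) | mX X]) ω)
    (htrans : ∀ f : ℝ × ℝ → ℝ, Measurable f → (∃ C, ∀ p, |f p| ≤ C) →
      P[fun ω => G ω * f (Y0 ω, Y1 ω) | mX X]
        =ᵐ[P] fun ω => π (X ω) * (P[fun ω => f (Y0 ω, Y1 ω) | mX X]) ω)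
    (hμ1 : (fun ω => μ1 (X ω) * e1 (X ω) * π (X ω)) =ᵐ[P]
      P[fun ω => A ω * G ω * Y ω | mX X])
    (hμ0 : (fun ω => μ0 (X ω) * (1 - e1 (X ω)) * π (X ω)) =ᵐ[P]
      P[fun ω => (1 - A ω) * G ω * Y ω | mX X])
    (e0 : ℝ → ℝ) (he0m : Measurable e0)
    (he0 : (fun ω => e0 (X ω) * (1 - π (X ω))) =ᵐ[P] P[fun ω => A ω * (1 - G ω) | mX X])
    (hpose0 : ∀ᵐ ω ∂P, 0 < e0 (X ω) ∧ e0 (X ω) < 1)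
    (hunconf0 : ∀ f : ℝ × ℝ → ℝ, Measurable f → (∃ C, ∀ p, |f p| ≤ C) →
      P[fun ω => (1 - G ω) * A ω * f (Y0 ω, Y1 ω) | mX X]
        =ᵐ[P] fun ω => e0 (X ω) * (P[fun ω => (1 - G ω) * f (Y0 ω, Y1 ω) | mX X]) ω)
    (q ebar τatt : ℝ)
    (hq : q = (P {ω | G ω = 1}).toReal) (hq0 : 0 < q) (hq1 : q < 1)
    (hebar : ebar = (∫ ω, A ω * (1 - G ω) ∂P) / (1 - q)) (hebarpos : 0 < ebar)
    (hτatt : τatt = (∫ ω, A ω * (1 - G ω) * (Y1 ω - Y0 ω) ∂P) / ((1 - q) * ebar))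
    (φatt : Ω → ℝ)
    (hφatt : ∀ ω, φatt ω =
      G ω / ((1 - q) * ebar) *
        (A ω * (Y ω - μ1 (X ω)) / e1 (X ω)
          - (1 - A ω) * (Y ω - μ0 (X ω)) / (1 - e1 (X ω)))
        * ((1 - π (X ω)) * e0 (X ω) / π (X ω))
      + (1 - G ω) * A ω / ((1 - q) * ebar) * (μ1 (X ω) - μ0 (X ω) - τatt))
    (hφattint : Integrable φatt P) :
    ∫ ω, φatt ω ∂P = 0 :=
  target_att_eif_mean_zero_general P X A G Y0 Y1 Y hX hA hG hY0m hY1m hY0 hY1 hAbin hGbin hcons e1 π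
    μ0 μ1 he1m hπm hμ0m hμ1m hπ he1 hpose hposπ hunconf htrans hμ1 hμ0 e0 he0m he0 hpose0 hunconf0 q
    ebar τatt hebar hτatt φatt hφatt hφattint
end
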